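/- arXiv:0805.1872 — 9 statements merged into one kernel-verified Lean document; each statement's English description precedes it below -/
import Mathlib

section
/- A permutation π = π_ℓ n π_r of {1,...,n} (where n is the largest element, π_ℓ is the part to the left of n and π_r the part to the right) avoids the generalized pattern k-σ (σ a contiguous pattern, k larger than every letter of σ) if and only if π_ℓ avoids k-σ and π_r avoids σ. -/
/-!
Since `n` exceeds every other entry, it can never lie inside an occurrence of `σ` that sits below
some larger entry `k`. So in an occurrence of `k-σ` in `π_ℓ n π_r` the occurrence of `σ` lies
entirely in `π_ℓ` or entirely in `π_r`; in the first case its `k` lies in `π_ℓ` too, and in the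
second case `n` itself can serve as `k`.
-/

/-- `l` is a permutation of `{1, …, n}`. -/
def IsPermOf (n : ℕ) (l : List ℕ) : Prop :=
  l.Perm ((List.range n).map (· + 1))

/-- The word `w` forms (is an occurrence, using all its entries, of) the
partially ordered pattern `σ`. -/
def FormsPOP (σ w : List ℕ) : Prop :=
  w.length = σ.length ∧
  ∀ i j, i < σ.length → j < σ.length →
    σ.getD i 0 < σ.getD j 0 → w.getD i 0 < w.getD j 0

/-- `π` contains an occurrence of the contiguous pattern `σ`. -/
def OccursContig (σ π : List ℕ) : Prop :=
  ∃ A w B, π = A ++ w ++ B ∧ FormsPOP σ w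

/-- `π` contains an occurrence of the pattern `k-σ`, where `k` is larger than all
letters of `σ`: an element to the left of, and greater than all elements of, a
consecutive occurrence of `σ`. -/
def OccursKS (σ π : List ℕ) : Prop :=
  ∃ A x B w C, π = A ++ x :: (B ++ w ++ C) ∧ FormsPOP σ w ∧ ∀ y ∈ w, y < x

namespace List

variable {α : Type*}

theorem prefix_of_prefix_append_cons_of_not_mem {w l r : List α} {a : α}
    (hw : w <+: l ++ a :: r) (ha : a ∉ w) : w <+: l := by
  induction w generalizing l with
  | nil => exact nil_prefix
  | cons b w ih =>
    cases l with
    | nil =>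
      obtain ⟨rfl, -⟩ := cons_prefix_cons.1 hw
      exact absurd mem_cons_self ha
    | cons c l =>
      rw [cons_append] at hw
      obtain ⟨rfl, htail⟩ := cons_prefix_cons.1 hw
      exact cons_prefix_cons.2 ⟨rfl, ih htail (fun h => ha (mem_cons_of_mem b h))⟩

theorem infix_or_infix_of_infix_append_cons_of_not_mem {w l r : List α} {a : α}
    (hw : w <:+: l ++ a :: r) (ha : a ∉ w) : w <:+: l ∨ w <:+: r := by
  induction l with
  | nil =>
    rcases infix_cons_iff.1 hw with hw | hw
    · exact .inl (by simpa using prefix_of_prefix_append_cons_of_not_mem (l := []) hw ha)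
    · exact .inr hw
  | cons c l ih =>
    rcases infix_cons_iff.1 hw with hw | hw
    · exact .inl (prefix_of_prefix_append_cons_of_not_mem hw ha).isInfix
    · exact (ih hw).imp_left (fun h => h.trans (suffix_cons c l).isInfix)

end List

def OccursContigBelow (σ : List ℕ) (k : ℕ) (π : List ℕ) : Prop :=
  ∃ w, w <:+: π ∧ FormsPOP σ w ∧ ∀ y ∈ w, y < k

variable {σ π : List ℕ} {k : ℕ}

theorem occursContig_iff_exists_infix : OccursContig σ π ↔ ∃ w, w <:+: π ∧ FormsPOP σ w :=
  ⟨fun ⟨A, w, B, h, hw⟩ => ⟨w, ⟨A, B, h.symm⟩, hw⟩,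
    fun ⟨w, ⟨A, B, h⟩, hw⟩ => ⟨A, w, B, h.symm, hw⟩⟩

theorem OccursContigBelow.occursContig (h : OccursContigBelow σ k π) :
    OccursContig σ π :=
  let ⟨w, hw, hσw, _⟩ := h
  occursContig_iff_exists_infix.2 ⟨w, hw, hσw⟩

theorem OccursContig.occursContigBelow (h : OccursContig σ π)
    (hπ : ∀ y ∈ π, y < k) : OccursContigBelow σ k π :=
  let ⟨w, hw, hσw⟩ := occursContig_iff_exists_infix.1 h
  ⟨w, hw, hσw, fun y hy => hπ y (hw.subset hy)⟩

theorem OccursContigBelow.append_right (h : OccursContigBelow σ k π)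
    (t : List ℕ) : OccursContigBelow σ k (π ++ t) :=
  let ⟨w, hw, hσw, hwk⟩ := h
  ⟨w, hw.trans List.infix_append_left, hσw, hwk⟩

theorem OccursContigBelow.of_append_cons {m : ℕ} {l r : List ℕ}
    (h : OccursContigBelow σ k (l ++ m :: r)) (hkm : k ≤ m) :
    OccursContigBelow σ k l ∨ OccursContigBelow σ k r := by
  obtain ⟨w, hw, hσw, hwk⟩ := h
  have hmw : m ∉ w := fun hm => absurd (hwk m hm) (not_lt.2 hkm)
  exact (List.infix_or_infix_of_infix_append_cons_of_not_mem hw hmw).imp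
    (fun hl => ⟨w, hl, hσw, hwk⟩) (fun hr => ⟨w, hr, hσw, hwk⟩)

theorem not_occursKS_nil : ¬ OccursKS σ [] := by
  rintro ⟨A, x, B, w, C, h, -⟩
  simp at h

theorem occursKS_cons_iff {x : ℕ} :
    OccursKS σ (x :: π) ↔ OccursKS σ π ∨ OccursContigBelow σ x π := by
  constructor
  · rintro ⟨A, y, B, w, C, h, hσw, hwy⟩
    cases A with
    | nil =>
      obtain ⟨rfl, rfl⟩ := List.cons_eq_cons.1 h
      exact .inr ⟨w, List.infix_append B w C, hσw, hwy⟩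
    | cons a A =>
      obtain ⟨-, rfl⟩ := List.cons_eq_cons.1 h
      exact .inl ⟨A, y, B, w, C, rfl, hσw, hwy⟩
  · rintro (⟨A, y, B, w, C, rfl, hσw, hwy⟩ | ⟨w, ⟨B, C, rfl⟩, hσw, hwx⟩)
    · exact ⟨x :: A, y, B, w, C, rfl, hσw, hwy⟩
    · exact ⟨[], x, B, w, C, rfl, hσw, hwx⟩

theorem OccursKS.occursContig (h : OccursKS σ π) : OccursContig σ π :=
  let ⟨A, x, B, w, C, hπ, hσw, _⟩ := h
  ⟨A ++ x :: B, w, C, by simp [hπ], hσw⟩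

theorem occursKS_append_cons_iff {m : ℕ} {l r : List ℕ} (hl : ∀ y ∈ l, y ≤ m)
    (hr : ∀ y ∈ r, y < m) :
    OccursKS σ (l ++ m :: r) ↔ OccursKS σ l ∨ OccursContig σ r := by
  induction l with
  | nil =>
    rw [List.nil_append, occursKS_cons_iff]
    simp only [not_occursKS_nil, false_or]
    exact ⟨fun h => h.elim OccursKS.occursContig OccursContigBelow.occursContig,
      fun h => .inr (h.occursContigBelow hr)⟩
  | cons a l ih =>
    have ham : a ≤ m := hl a List.mem_cons_self
    rw [List.cons_append, occursKS_cons_iff, occursKS_cons_iff,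
      ih (fun y hy => hl y (List.mem_cons_of_mem a hy))]
    constructor
    · rintro ((hl | hr) | hbelow)
      · exact .inl (.inl hl)
      · exact .inr hr
      · exact (hbelow.of_append_cons ham).imp .inr OccursContigBelow.occursContig
    · rintro ((hl | hbelow) | hr)
      · exact .inl (.inl hl)
      · exact .inr (hbelow.append_right _)
      · exact .inl (.inr hr)

theorem IsPermOf.le_of_mem {n : ℕ} (h : IsPermOf n π) {y : ℕ} (hy : y ∈ π) :
    y ≤ n := by
  obtain ⟨i, hi, rfl⟩ := List.mem_map.1 (h.mem_iff.1 hy)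
  exact List.mem_range.1 hi

theorem IsPermOf.nodup {n : ℕ} (h : IsPermOf n π) : π.Nodup :=
  h.nodup_iff.2 (List.nodup_range.map fun _ _ => Nat.succ.inj)

theorem avoid_ks_split_general (σ : List ℕ) (n : ℕ) (l r : List ℕ)
    (hperm : IsPermOf n (l ++ n :: r)) :
    ¬ OccursKS σ (l ++ n :: r) ↔ (¬ OccursKS σ l ∧ ¬ OccursContig σ r) := by
  have hl : ∀ y ∈ l, y ≤ n := fun y hy => hperm.le_of_mem (List.mem_append_left _ hy)
  have hnr : n ∉ r := (List.nodup_cons.1 hperm.nodup.of_append_right).1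
  have hr : ∀ y ∈ r, y < n := fun y hy =>
    (hperm.le_of_mem (by simp [hy])).lt_of_ne (ne_of_mem_of_not_mem hy hnr)
  rw [occursKS_append_cons_iff hl hr, not_or]

theorem avoid_ks_split (σ : List ℕ) (hσ : σ ≠ []) (n : ℕ) (l r : List ℕ)
    (hperm : IsPermOf n (l ++ n :: r)) :
    ¬ OccursKS σ (l ++ n :: r) ↔ (¬ OccursKS σ l ∧ ¬ OccursContig σ r) :=
  avoid_ks_split_general σ n l r hperm
end

section
/- A permutation π = π_ℓ n π_r of {1,...,n} avoids the pattern k-σ-k (σ contiguous, k larger than every letter of σ) if and only if π_ℓ avoids k-σ and π_r avoids σ-k. -/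
/-- occurrence of `σ-k`: a large element to the right of a consecutive occurrence of `σ`. -/
def OccursSK (σ π : List ℕ) : Prop :=
  ∃ A w B x C, π = A ++ w ++ B ++ x :: C ∧ FormsPOP σ w ∧ ∀ y ∈ w, y < x

/-- occurrence of `k-σ-k`: a consecutive occurrence of `σ` with a larger element on
each side. -/
def OccursKSK (σ π : List ℕ) : Prop :=
  ∃ A x B w C y D, π = A ++ x :: (B ++ w ++ C ++ y :: D) ∧ FormsPOP σ w ∧
    (∀ z ∈ w, z < x) ∧ (∀ z ∈ w, z < y)

/-
The maximum `n` exceeds every other letter, so it can serve as the outer large letter of a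
`k-σ-k` occurrence: a `k-σ` occurrence in `π_ℓ` or a `σ-k` occurrence in `π_r` extends to one in
`π`. Conversely, in a `k-σ-k` occurrence in `π` the factor realizing `σ` cannot contain `n`,
since it lies below the letters on either side of it; hence it lies inside `π_ℓ`, giving a
`k-σ` occurrence there, or inside `π_r`, giving a `σ-k` occurrence there.
-/

theorem IsPermOf.le_of_mem_s1 {n : ℕ} {π : List ℕ} (hπ : IsPermOf n π) {x : ℕ} (hx : x ∈ π) :
    x ≤ n := by
  have := hπ.subset hx
  simp only [List.mem_map, List.mem_range] at this
  omega

theorem List.append_cons_eq_append_append {α : Type*} {l r u w v : List α} {m : α}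
    (h : l ++ m :: r = u ++ w ++ v) :
    (∃ t, l = u ++ w ++ t) ∨ (∃ s, r = s ++ w ++ v) ∨ m ∈ w := by
  rcases List.append_eq_append_iff.mp h with ⟨_ | ⟨b, a⟩, huw, hmr⟩ | ⟨c, hl, -⟩
  · exact Or.inl ⟨[], by simpa using huw.symm⟩
  · obtain ⟨rfl, hr⟩ := List.cons_eq_cons.mp hmr
    rcases List.append_eq_append_iff.mp huw with ⟨c, -, hw⟩ | ⟨_ | ⟨b, c⟩, -, hma⟩
    · exact Or.inr (Or.inr (by simp [hw]))
    · exact Or.inr (Or.inr (by rw [List.nil_append] at hma; simp [← hma]))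
    · obtain ⟨-, ha⟩ := List.cons_eq_cons.mp hma
      exact Or.inr (Or.inl ⟨c, by simp [hr, ha]⟩)
  · exact Or.inl ⟨c, by simpa using hl⟩

theorem OccursKS.occursKSK_append_cons {σ l : List ℕ} {m : ℕ} (h : OccursKS σ l)
    (hmax : ∀ z ∈ l, z ≤ m) (r : List ℕ) : OccursKSK σ (l ++ m :: r) := by
  obtain ⟨A, x, B, w, C, rfl, hpop, hw⟩ := h
  exact ⟨A, x, B, w, C, m, r, by simp, hpop, hw,
    fun z hz => (hw z hz).trans_le (hmax x (by simp))⟩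

theorem OccursSK.occursKSK_append_cons {σ r : List ℕ} {m : ℕ} (h : OccursSK σ r)
    (hmax : ∀ z ∈ r, z ≤ m) (l : List ℕ) : OccursKSK σ (l ++ m :: r) := by
  obtain ⟨A, w, B, x, C, rfl, hpop, hw⟩ := h
  exact ⟨l, m, A, w, B, x, C, rfl, hpop,
    fun z hz => (hw z hz).trans_le (hmax x (by simp)), hw⟩

theorem OccursKSK.occursKS_or_occursSK {σ l r : List ℕ} {m : ℕ}
    (h : OccursKSK σ (l ++ m :: r)) (hmax : ∀ z ∈ l ++ m :: r, z ≤ m) :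
    OccursKS σ l ∨ OccursSK σ r := by
  obtain ⟨A, x, B, w, C, y, D, heq, hpop, hwx, hwy⟩ := h
  have hfactor : l ++ m :: r = (A ++ x :: B) ++ w ++ (C ++ y :: D) := by simp [heq]
  rcases List.append_cons_eq_append_append hfactor with ⟨t, hl⟩ | ⟨s, hr⟩ | hm
  · exact Or.inl ⟨A, x, B, w, t, by simp [hl], hpop, hwx⟩
  · exact Or.inr ⟨s, w, C, y, D, by simp [hr], hpop, hwy⟩
  · exact absurd (hwx m hm) (not_lt.mpr (hmax x (by simp [heq])))

theorem avoid_ksk_split_general (σ : List ℕ) (n : ℕ) (l r : List ℕ)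
    (hperm : IsPermOf n (l ++ n :: r)) :
    ¬ OccursKSK σ (l ++ n :: r) ↔ (¬ OccursKS σ l ∧ ¬ OccursSK σ r) := by
  have hmax : ∀ z ∈ l ++ n :: r, z ≤ n := fun z hz => hperm.le_of_mem_s1 hz
  constructor
  · intro h
    exact ⟨fun hks => h (hks.occursKSK_append_cons (fun z hz => hmax z (by simp [hz])) r),
      fun hsk => h (hsk.occursKSK_append_cons (fun z hz => hmax z (by simp [hz])) l)⟩
  · rintro ⟨hks, hsk⟩ hksk
    exact (hksk.occursKS_or_occursSK hmax).elim hks hsk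

theorem avoid_ksk_split (σ : List ℕ) (hσ : σ ≠ []) (n : ℕ) (l r : List ℕ)
    (hperm : IsPermOf n (l ++ n :: r)) :
    ¬ OccursKSK σ (l ++ n :: r) ↔ (¬ OccursKS σ l ∧ ¬ OccursSK σ r) :=
  avoid_ksk_split_general σ n l r hperm
end

section
/- Let π = M_1 π_1 M_2 π_2 ... M_i π_i where M_1,...,M_i are the left-to-right maxima of π and π_1,...,π_i the (possibly empty) blocks following them. Then π avoids the pattern k-σ (σ contiguous, k greater than all letters of σ) if and only if each block π_j avoids the contiguous pattern σ. -/
namespace List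

variable {α : Type*}

theorem eq_nil_of_prefix_cons_of_notMem {v l : List α} {a : α} (hv : v <+: a :: l)
    (ha : a ∉ v) : v = [] := by
  rcases prefix_cons_iff.mp hv with hv | ⟨t, rfl, -⟩
  · exact hv
  · exact absurd mem_cons_self ha

theorem IsInfix.of_append_cons_of_notMem {w l₁ l₂ : List α} {a : α}
    (hw : w <:+: l₁ ++ a :: l₂) (ha : a ∉ w) : w <:+: l₁ ∨ w <:+: l₂ := by
  rcases infix_append_iff.mp hw with hw | hw | ⟨u, v, rfl, hu, hv⟩
  · exact Or.inl hw
  · rcases infix_cons_iff.mp hw with hw | hw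
    · rw [eq_nil_of_prefix_cons_of_notMem hw ha]
      exact Or.inl nil_infix
    · exact Or.inr hw
  · rw [eq_nil_of_prefix_cons_of_notMem hv fun h => ha (mem_append_right u h), append_nil]
    exact Or.inl hu.isInfix

theorem IsInfix.of_append_flatMap {w b₀ : List α} {L : List (α × List α)}
    (hw : w <:+: b₀ ++ L.flatMap fun p => p.1 :: p.2) (hL : ∀ p ∈ L, p.1 ∉ w) :
    w <:+: b₀ ∨ ∃ p ∈ L, w <:+: p.2 := by
  induction L generalizing b₀ with
  | nil => simpa using hw
  | cons q L ih =>
    rw [flatMap_cons, cons_append] at hw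
    rcases hw.of_append_cons_of_notMem (hL q mem_cons_self) with hw | hw
    · exact Or.inl hw
    · rcases ih hw fun p hp => hL p (mem_cons_of_mem q hp) with hw | ⟨p, hp, hw⟩
      · exact Or.inr ⟨q, mem_cons_self, hw⟩
      · exact Or.inr ⟨p, mem_cons_of_mem q hp, hw⟩

variable [LinearOrder α]

theorem exists_infix_snd_of_flatMap_eq {L : List (α × List α)} (hmax : L.Pairwise (·.1 < ·.1))
    (hblock : ∀ p ∈ L, ∀ y ∈ p.2, y < p.1) {A R w : List α} {x : α}
    (hπ : L.flatMap (fun p => p.1 :: p.2) = A ++ x :: R) (hw : w <:+: R)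
    (hwx : ∀ y ∈ w, y < x) : ∃ p ∈ L, w <:+: p.2 := by
  induction L generalizing A with
  | nil => simp at hπ
  | cons q L ih =>
    obtain ⟨m, b⟩ := q
    rw [pairwise_cons] at hmax
    have hblock' : ∀ p ∈ L, ∀ y ∈ p.2, y < p.1 := fun p hp => hblock p (mem_cons_of_mem _ hp)
    rw [flatMap_cons, append_eq_append_iff] at hπ
    rcases hπ with ⟨A', -, hrest⟩ | ⟨_ | ⟨x', c⟩, hmb, hR⟩
    · obtain ⟨p, hp, hw⟩ := ih hmax.2 hblock' hrest
      exact ⟨p, mem_cons_of_mem _ hp, hw⟩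
    · obtain ⟨p, hp, hw⟩ := ih (A := []) hmax.2 hblock' (by simpa using hR.symm)
      exact ⟨p, mem_cons_of_mem _ hp, hw⟩
    · obtain ⟨rfl, rfl⟩ := cons_eq_cons.mp hR
      have hblock_m : ∀ y ∈ b, y < m := hblock (m, b) mem_cons_self
      obtain ⟨hxm, hc⟩ : x ≤ m ∧ c <:+ b := by
        rcases A with _ | ⟨a, A⟩
        · obtain ⟨rfl, rfl⟩ := cons_eq_cons.mp hmb
          exact ⟨le_rfl, suffix_refl _⟩
        · obtain ⟨-, rfl⟩ := cons_eq_cons.mp hmb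
          exact ⟨(hblock_m x (by simp)).le, ⟨A ++ [x], by simp⟩⟩
      have hsep : ∀ p ∈ L, p.1 ∉ w := fun p hp hpw =>
        (hwx p.1 hpw).not_ge (hxm.trans (hmax.1 p hp).le)
      rcases hw.of_append_flatMap hsep with hw | ⟨p, hp, hw⟩
      · exact ⟨(m, b), mem_cons_self, hw.trans hc.isInfix⟩
      · exact ⟨p, mem_cons_of_mem _ hp, hw⟩

end List

open List in
theorem occursKS_flatMap_iff {σ : List ℕ} {L : List (ℕ × List ℕ)}
    (hmax : L.Pairwise (·.1 < ·.1)) (hblock : ∀ p ∈ L, ∀ y ∈ p.2, y < p.1) :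
    OccursKS σ (L.flatMap fun p => p.1 :: p.2) ↔ ∃ p ∈ L, OccursContig σ p.2 := by
  constructor
  · rintro ⟨A, x, B, w, C, hπ, hpop, hwx⟩
    obtain ⟨p, hp, s, t, hst⟩ :=
      exists_infix_snd_of_flatMap_eq hmax hblock hπ (infix_append B w C) hwx
    exact ⟨p, hp, s, w, t, hst.symm, hpop⟩
  · rintro ⟨p, hp, A, w, C, hp₂, hpop⟩
    obtain ⟨L₁, L₂, rfl⟩ := append_of_mem hp
    refine ⟨L₁.flatMap fun p => p.1 :: p.2, p.1, A, w, C ++ L₂.flatMap fun p => p.1 :: p.2,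
      by simp [hp₂], hpop, fun y hy => hblock p hp y ?_⟩
    simp [hp₂, hy]

theorem avoid_ks_iff_blocks_general (σ : List ℕ) (i : ℕ)
    (M : Fin i → ℕ) (B : Fin i → List ℕ) (π : List ℕ)
    (hπ : π = (List.ofFn fun j => M j :: B j).flatten)
    (hM : StrictMono M)
    (hB : ∀ j' j : Fin i, j' ≤ j → ∀ x ∈ B j', x < M j) :
    ¬ OccursKS σ π ↔ ∀ j : Fin i, ¬ OccursContig σ (B j) := by
  have hπ' : π = (List.ofFn fun j => (M j, B j)).flatMap fun p => p.1 :: p.2 := by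
    simp [hπ, List.flatMap, List.map_ofFn, Function.comp_def]
  have hmax : (List.ofFn fun j => (M j, B j)).Pairwise (·.1 < ·.1) :=
    List.pairwise_ofFn.mpr fun _ _ h => hM h
  have hblock : ∀ p ∈ List.ofFn (fun j => (M j, B j)), ∀ y ∈ p.2, y < p.1 := by
    simpa [List.mem_ofFn] using fun j => hB j j le_rfl
  rw [hπ', occursKS_flatMap_iff hmax hblock]
  simp [List.mem_ofFn]

/-- If `π = M₁π₁M₂π₂⋯Mᵢπᵢ`, where the `Mⱼ` are the left-to-right maxima of `π`
(`M` is strictly increasing, every entry of a block is smaller than the maxima at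
or before it), then `π` avoids `k-σ` iff every block `πⱼ` avoids the contiguous
pattern `σ`. -/
theorem avoid_ks_iff_blocks (σ : List ℕ) (hσ : σ ≠ []) (N i : ℕ)
    (M : Fin i → ℕ) (B : Fin i → List ℕ) (π : List ℕ)
    (hπ : π = (List.ofFn fun j => M j :: B j).flatten)
    (hperm : IsPermOf N π)
    (hM : StrictMono M)
    (hB : ∀ j' j : Fin i, j' ≤ j → ∀ x ∈ B j', x < M j) :
    ¬ OccursKS σ π ↔ ∀ j : Fin i, ¬ OccursContig σ (B j) :=
  avoid_ks_iff_blocks_general σ i M B π hπ hM hB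
end

section
/- A permutation π avoids the generalized pattern 3-12 if and only if π is a concatenation of decreasing sequences in which the first element of each decreasing sequence is greater than the first element of the preceding decreasing sequence. -/
/-- Occurrence of the generalized pattern `3-12` in `π`:
indices `i < j, j+1` with `π j < π (j+1) < π i`. -/
def Occ312 (π : List ℕ) : Prop :=
  ∃ i j, i < j ∧ j + 1 < π.length ∧
    π.getD j 0 < π.getD (j + 1) 0 ∧ π.getD (j + 1) 0 < π.getD i 0

/-!
Cut `π` into its maximal decreasing runs. A decomposition as in the theorem can only be this
one, because the last entry of a block is at most its head, which is below the next head.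
For distinct entries, the ascent tops of `π` (entries larger than their predecessor) are exactly
the heads of all runs but the first, and an occurrence of 3-12 at the first entry `a` is an
ascent top smaller than `a`. Peeling off entries from the front therefore shows that `π` avoids
3-12 iff the run heads increase.
-/

namespace Pattern312

def runs (l : List ℕ) : List (List ℕ) :=
  l.splitBy fun x y => y < x

def runHeads (l : List ℕ) : List ℕ :=
  (runs l).map (·.headD 0)

lemma flatten_runs (l : List ℕ) : (runs l).flatten = l :=
  List.flatten_splitBy _ l

lemma ne_nil_of_mem_runs {l r : List ℕ} (hr : r ∈ runs l) : r ≠ [] :=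
  List.ne_nil_of_mem_splitBy hr

lemma isChain_of_mem_runs {l r : List ℕ} (hr : r ∈ runs l) : r.IsChain (· > ·) := by
  simpa using List.isChain_of_mem_splitBy hr

lemma mem_of_mem_runHeads {l : List ℕ} {c : ℕ} (hc : c ∈ runHeads l) : c ∈ l := by
  obtain ⟨r, hr, rfl⟩ := List.mem_map.mp hc
  obtain ⟨b, g, rfl⟩ := List.exists_cons_of_ne_nil (ne_nil_of_mem_runs hr)
  rw [← flatten_runs l]
  exact List.mem_flatten_of_mem hr List.mem_cons_self

lemma getLast_le_head_of_isChain_gt {α : Type*} [Preorder α] {r : List α} (hr : r ≠ [])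
    (h : r.IsChain (· > ·)) : r.getLast hr ≤ r.head hr := by
  obtain ⟨x, t, rfl⟩ := List.exists_cons_of_ne_nil hr
  rw [List.isChain_iff_pairwise, List.pairwise_cons] at h
  rcases List.mem_cons.mp (List.getLast_mem hr) with hx | ht
  · exact hx.le
  · exact (h.1 _ ht).le

lemma runs_flatten {L : List (List ℕ)} (hL : ∀ r ∈ L, r ≠ [] ∧ r.IsChain (· > ·))
    (hheads : (L.map (·.headD 0)).IsChain (· < ·)) : runs L.flatten = L := by
  refine List.splitBy_flatten (fun h => (hL [] h).1 rfl) (fun r hr => by simpa using (hL r hr).2) ?_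
  rw [List.isChain_map] at hheads
  refine hheads.imp_of_mem_imp fun r s hr hs hrs => ⟨(hL r hr).1, (hL s hs).1, ?_⟩
  have hlast := getLast_le_head_of_isChain_gt (hL r hr).1 (hL r hr).2
  obtain ⟨x, t, rfl⟩ := List.exists_cons_of_ne_nil (hL r hr).1
  obtain ⟨y, u, rfl⟩ := List.exists_cons_of_ne_nil (hL s hs).1
  exact decide_eq_false (hlast.trans_lt hrs).not_gt

lemma runs_cons_cons_of_le {a b : ℕ} (m : List ℕ) (h : a ≤ b) :
    runs (a :: b :: m) = [a] :: runs (b :: m) :=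
  List.splitBy_append_cons (l := [a]) m (by simpa using h)

lemma runs_cons_cons_of_lt {a b : ℕ} {m g : List ℕ} {gs : List (List ℕ)} (h : b < a)
    (hrun : runs (b :: m) = g :: gs) : runs (a :: b :: m) = (a :: g) :: gs := by
  obtain ⟨hflat, hnil, hchain, hlast⟩ := List.splitBy_eq_iff.mp hrun
  have hg : g ≠ [] := fun h => hnil (h ▸ List.mem_cons_self)
  obtain ⟨b', g', rfl⟩ := List.exists_cons_of_ne_nil hg
  obtain ⟨rfl, -⟩ : b = b' ∧ _ := by simpa using hflat
  refine List.splitBy_eq_iff.mpr ⟨by simpa using hflat, ?_, ?_, ?_⟩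
  · simpa using hnil
  · simpa [h] using hchain
  · simpa [List.isChain_cons] using hlast

lemma exists_runs_cons_eq (a : ℕ) (l : List ℕ) :
    ∃ g gs, runs (a :: l) = (a :: g) :: gs := by
  obtain ⟨r, gs, hrun⟩ : ∃ r gs, runs (a :: l) = r :: gs :=
    List.exists_cons_of_ne_nil (List.splitBy_ne_nil.mpr (List.cons_ne_nil a l))
  obtain ⟨b, g, rfl⟩ := List.exists_cons_of_ne_nil (ne_nil_of_mem_runs (hrun ▸ List.mem_cons_self))
  have hflat := flatten_runs (a :: l)
  rw [hrun] at hflat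
  obtain ⟨rfl, -⟩ : b = a ∧ _ := by simpa using hflat
  exact ⟨g, gs, hrun⟩

lemma runHeads_singleton (a : ℕ) : runHeads [a] = [a] := rfl

lemma runHeads_cons (a : ℕ) (l : List ℕ) :
    runHeads (a :: l) = a :: (runHeads (a :: l)).tail := by
  obtain ⟨g, gs, hrun⟩ := exists_runs_cons_eq a l
  simp [runHeads, hrun]

lemma runHeads_cons_cons_of_le {a b : ℕ} (m : List ℕ) (h : a ≤ b) :
    runHeads (a :: b :: m) = a :: runHeads (b :: m) := by
  simp [runHeads, runs_cons_cons_of_le m h]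

lemma runHeads_cons_cons_of_lt {a b : ℕ} (m : List ℕ) (h : b < a) :
    runHeads (a :: b :: m) = a :: (runHeads (b :: m)).tail := by
  obtain ⟨g, gs, hrun⟩ := exists_runs_cons_eq b m
  simp [runHeads, runs_cons_cons_of_lt h hrun, hrun]

def IsAscentTop (l : List ℕ) (c : ℕ) : Prop :=
  ∃ j, j + 1 < l.length ∧ l.getD j 0 < l.getD (j + 1) 0 ∧ l.getD (j + 1) 0 = c

lemma occ312_cons_iff {a : ℕ} {l : List ℕ} :
    Occ312 (a :: l) ↔ Occ312 l ∨ ∃ c, IsAscentTop l c ∧ c < a := by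
  constructor
  · rintro ⟨i, j, hij, hlen, hjc, hci⟩
    obtain ⟨j, rfl⟩ : ∃ j', j = j' + 1 := ⟨j - 1, by omega⟩
    cases i with
    | zero => exact .inr ⟨_, ⟨j, by simpa using hlen, by simpa using hjc, rfl⟩, by simpa using hci⟩
    | succ i =>
      exact .inl ⟨i, j, by omega, by simpa using hlen, by simpa using hjc, by simpa using hci⟩
  · rintro (⟨i, j, hij, hlen, hjc, hci⟩ | ⟨c, ⟨j, hlen, hjc, rfl⟩, hca⟩)
    · exact ⟨i + 1, j + 1, by omega, by simpa using hlen, by simpa using hjc, by simpa using hci⟩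
    · exact ⟨0, j + 1, by omega, by simpa using hlen, by simpa using hjc, by simpa using hca⟩

lemma not_isAscentTop_singleton (a c : ℕ) : ¬IsAscentTop [a] c := by
  rintro ⟨j, hlen, -⟩
  simp at hlen

lemma isAscentTop_cons_cons_iff {a b c : ℕ} {m : List ℕ} :
    IsAscentTop (a :: b :: m) c ↔ IsAscentTop (b :: m) c ∨ (a < b ∧ b = c) := by
  constructor
  · rintro ⟨_ | j, hlen, hjc, rfl⟩
    · exact .inr ⟨by simpa using hjc, rfl⟩
    · exact .inl ⟨j, by simpa using hlen, by simpa using hjc, rfl⟩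
  · rintro (⟨j, hlen, hjc, rfl⟩ | ⟨hab, rfl⟩)
    · exact ⟨j + 1, by simpa using hlen, by simpa using hjc, rfl⟩
    · exact ⟨0, by simp, by simpa using hab, rfl⟩

lemma isAscentTop_iff_mem_tail_runHeads {l : List ℕ} (hl : l.Nodup) {c : ℕ} :
    IsAscentTop l c ↔ c ∈ (runHeads l).tail := by
  induction l with
  | nil => simp [IsAscentTop, runHeads, runs]
  | cons a l ih =>
    cases l with
    | nil => simpa [runHeads_singleton] using not_isAscentTop_singleton a c
    | cons b m =>
      obtain ⟨hab, hbm⟩ : a ≠ b ∧ (b :: m).Nodup := by simp_all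
      rw [isAscentTop_cons_cons_iff, ih hbm]
      rcases hab.lt_or_gt with hab | hba
      · rw [runHeads_cons_cons_of_le m hab.le, List.tail_cons, runHeads_cons]
        simp [hab, eq_comm, or_comm]
      · simp [runHeads_cons_cons_of_lt m hba, hba.not_gt]

lemma not_occ312_iff_sortedLT_runHeads {l : List ℕ} (hl : l.Nodup) :
    ¬Occ312 l ↔ (runHeads l).SortedLT := by
  induction l with
  | nil => simp [runHeads, runs, Occ312, List.sortedLT_iff_pairwise]
  | cons a l ih =>
    cases l with
    | nil => simp [runHeads_singleton, Occ312, List.sortedLT_iff_pairwise]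
    | cons b m =>
      obtain ⟨ha, hbm⟩ : a ∉ b :: m ∧ (b :: m).Nodup := List.nodup_cons.mp hl
      obtain ⟨T, hbT⟩ : ∃ T, runHeads (b :: m) = b :: T := ⟨_, runHeads_cons b m⟩
      have hne : ∀ c ∈ b :: T, a ≠ c := fun c hc hac =>
        ha (hac ▸ mem_of_mem_runHeads (hbT ▸ hc))
      have hocc : ¬Occ312 (a :: b :: m) ↔ (b :: T).SortedLT ∧ ∀ c ∈ T, a ≤ c := by
        rw [occ312_cons_iff, not_or, ih hbm, ← hbT]
        simp only [isAscentTop_iff_mem_tail_runHeads hbm, hbT, List.tail_cons, not_exists,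
          not_and, not_lt]
      rw [hocc]
      rcases (hne b List.mem_cons_self).lt_or_gt with hab | hba
      · rw [runHeads_cons_cons_of_le m hab.le, hbT]
        simp only [List.sortedLT_iff_pairwise, List.pairwise_cons, List.mem_cons] at hne ⊢
        grind
      · rw [runHeads_cons_cons_of_lt m hba, hbT, List.tail_cons]
        simp only [List.sortedLT_iff_pairwise, List.pairwise_cons, List.mem_cons] at hne ⊢
        grind

end Pattern312

open Pattern312 in
theorem avoid_312_iff (n : ℕ) (π : List ℕ) (hperm : IsPermOf n π) :
    ¬ Occ312 π ↔
      ∃ (i : ℕ) (D : Fin i → List ℕ),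
        π = (List.ofFn D).flatten ∧
        (∀ j, D j ≠ [] ∧ (D j).Chain' (· > ·)) ∧
        (∀ (j : ℕ) (h : j + 1 < i),
          (D ⟨j, by omega⟩).headD 0 < (D ⟨j + 1, h⟩).headD 0) := by
  have hnd : π.Nodup := hperm.nodup_iff.mpr (List.nodup_range.map (add_left_injective 1))
  rw [not_occ312_iff_sortedLT_runHeads hnd, List.sortedLT_iff_isChain, runHeads]
  constructor
  · intro hheads
    rw [← List.ofFn_get (runs π), List.map_ofFn, List.isChain_ofFn] at hheads
    exact ⟨_, (runs π).get, by rw [List.ofFn_get, flatten_runs],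
      fun j => ⟨ne_nil_of_mem_runs (List.get_mem _ j), isChain_of_mem_runs (List.get_mem _ j)⟩,
      hheads⟩
  · rintro ⟨i, D, rfl, hD, hheads⟩
    have hchain : ((List.ofFn D).map (·.headD 0)).IsChain (· < ·) := by
      rwa [List.map_ofFn, List.isChain_ofFn]
    have hblocks : ∀ r ∈ List.ofFn D, r ≠ [] ∧ r.IsChain (· > ·) := by
      intro r hr
      obtain ⟨j, rfl⟩ := List.mem_ofFn.mp hr
      exact hD j
    rwa [runs_flatten hblocks hchain]
end

section
/- Permutations of {1,...,n} avoiding the generalized pattern 3-12 are in bijection with set partitions of {1,...,n}; in particular the number of (3-12)-avoiding permutations of length n equals the n-th Bell number. -/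
/-!
Cut a word with distinct letters into its maximal decreasing runs. Its ascents are exactly the
junctions between consecutive runs, so an occurrence of `3-12` is a letter exceeding the head of
a later run, and the word avoids `3-12` iff the run heads, which are the run maxima, increase.
The runs of such a permutation of `{1, …, n}` are the blocks of a set partition, and a partition
is recovered as a word by writing its blocks decreasingly, in increasing order of their maxima.
-/

namespace List

variable {α : Type*} [LinearOrder α]

theorem SortedGT.le_head! [Inhabited α] {r : List α} (hr : r.SortedGT) {x : α} (hx : x ∈ r) :
    x ≤ r.head! := by
  cases r with
  | nil => simp at hx
  | cons y r =>
    rcases mem_cons.mp hx with rfl | hx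
    · exact le_rfl
    · exact ((pairwise_cons.mp hr.pairwise).1 x hx).le

def descRuns (l : List α) : List (List α) :=
  l.splitBy fun a b => decide (b < a)

theorem flatten_descRuns (l : List α) : (descRuns l).flatten = l :=
  flatten_splitBy _ l

theorem nil_notMem_descRuns (l : List α) : [] ∉ descRuns l :=
  nil_notMem_splitBy _ l

theorem sortedGT_of_mem_descRuns {l r : List α} (h : r ∈ descRuns l) : r.SortedGT := by
  simpa [sortedGT_iff_isChain] using isChain_of_mem_splitBy h

theorem pairwise_disjoint_descRuns {l : List α} (hl : l.Nodup) :
    (descRuns l).Pairwise Disjoint :=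
  (nodup_flatten.mp ((flatten_descRuns l).symm ▸ hl)).2

theorem nodup_descRuns {l : List α} (hl : l.Nodup) : (descRuns l).Nodup :=
  (pairwise_disjoint_descRuns hl).imp_of_mem fun {r _} hr _ hd h => by
    obtain ⟨x, r, rfl⟩ :=
      exists_cons_of_ne_nil (ne_of_mem_of_not_mem hr (nil_notMem_descRuns l))
    exact hd mem_cons_self (h ▸ mem_cons_self)

theorem mem_of_mem_descRuns {l r : List α} {x : α} (hr : r ∈ descRuns l) (hx : x ∈ r) :
    x ∈ l :=
  flatten_descRuns l ▸ mem_flatten_of_mem hr hx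

theorem eq_of_mem_descRuns {l r r' : List α} (hl : l.Nodup) (hr : r ∈ descRuns l)
    (hr' : r' ∈ descRuns l) {x : α} (hx : x ∈ r) (hx' : x ∈ r') : r = r' := by
  have : Std.Symm (α := List α) Disjoint := ⟨fun _ _ h => h.symm⟩
  by_contra hne
  exact (pairwise_disjoint_descRuns hl).forall hr hr' hne hx hx'

theorem descRuns_flatten [Inhabited α] {B : List (List α)} (hB : [] ∉ B)
    (hdesc : ∀ b ∈ B, b.SortedGT) (hheads : (B.map head!).SortedLT) :
    descRuns B.flatten = B := by
  refine splitBy_flatten hB (fun b hb => by simpa [sortedGT_iff_isChain] using hdesc b hb) ?_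
  rw [sortedLT_iff_isChain, isChain_map] at hheads
  refine hheads.imp_of_mem_imp fun b c hb hc h => ?_
  obtain ⟨y, c, rfl⟩ := exists_cons_of_ne_nil (ne_of_mem_of_not_mem hc hB)
  refine ⟨ne_of_mem_of_not_mem hb hB, cons_ne_nil y c, ?_⟩
  exact decide_eq_false (((hdesc b hb).le_head! (getLast_mem _)).trans_lt h).not_gt

theorem exists_eq_append_of_flatten_eq_of_lt {B : List (List α)} (hdesc : ∀ b ∈ B, b.SortedGT)
    {p s : List α} {a b : α} (h : B.flatten = p ++ a :: b :: s) (hab : a < b) :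
    ∃ B₁ B₂, B = B₁ ++ B₂ ∧ B₁.flatten = p ++ [a] ∧ B₂.flatten = b :: s := by
  induction B generalizing p with
  | nil => simp at h
  | cons c B ih =>
    have hB : ∀ b ∈ B, b.SortedGT := fun b hb => hdesc b (mem_cons_of_mem c hb)
    rw [flatten_cons, append_eq_append_iff] at h
    obtain ⟨q, rfl, hq⟩ | ⟨q, rfl, hq⟩ := h
    · obtain ⟨B₁, B₂, rfl, h₁, h₂⟩ := ih hB hq
      exact ⟨c :: B₁, B₂, rfl, by simp [h₁], h₂⟩
    · match q, hq with
      | [], hq =>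
        obtain ⟨B₁, B₂, rfl, h₁, h₂⟩ := ih hB (p := []) hq.symm
        exact ⟨(p ++ []) :: B₁, B₂, rfl, by simp [h₁], h₂⟩
      | [_], hq =>
        obtain ⟨rfl, hB'⟩ : _ ∧ _ := by simpa using hq
        exact ⟨[p ++ [a]], B, rfl, by simp, hB'.symm⟩
      | _ :: _ :: _, hq =>
        obtain ⟨rfl, rfl, -⟩ : _ ∧ _ ∧ _ := by simpa using hq
        have := (hdesc _ mem_cons_self).pairwise.sublist (show [a, b] <+ p ++ a :: b :: _ by simp)
        exact absurd (by simpa using this) hab.not_gt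

theorem sortedLT_map_head!_iff [Inhabited α] {B : List (List α)} (hB : [] ∉ B)
    (hdisj : B.Pairwise Disjoint) : (B.map head!).SortedLT ↔ B.Pairwise (· ≤ ·) := by
  rw [sortedLT_iff_pairwise, pairwise_map]
  constructor <;> refine fun h => (h.and hdisj).imp_of_mem fun {b c} hb hc ⟨hbc, hd⟩ => ?_
  all_goals
    obtain ⟨x, b, rfl⟩ := exists_cons_of_ne_nil (ne_of_mem_of_not_mem hb hB)
    obtain ⟨y, c, rfl⟩ := exists_cons_of_ne_nil (ne_of_mem_of_not_mem hc hB)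
  · exact le_of_lt (show x :: b < y :: c from Lex.rel (by simpa using hbc))
  · have hxy : x ≠ y := fun h => hd mem_cons_self (h ▸ mem_cons_self)
    rcases hbc.lt_or_eq with hbc | hbc
    · exact lt_of_le_of_ne (head_le_of_lt hbc) hxy
    · exact absurd (cons_eq_cons.mp hbc).1 hxy

end List

open List

theorem occ312_iff {l : List ℕ} :
    Occ312 l ↔ ∃ p a b s, l = p ++ a :: b :: s ∧ a < b ∧ ∃ c ∈ p, b < c := by
  constructor
  · rintro ⟨i, j, hij, hj, hab, hbc⟩
    refine ⟨l.take j, l[j], l[j + 1], l.drop (j + 2), ?_, ?_, l[i], ?_, ?_⟩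
    · simp
    · rwa [getD_eq_getElem _ _ hj, getD_eq_getElem _ _ (by omega)] at hab
    · exact mem_take_iff_getElem.mpr ⟨i, by omega, rfl⟩
    · rwa [getD_eq_getElem _ _ hj, getD_eq_getElem _ _ (by omega)] at hbc
  · rintro ⟨p, a, b, s, rfl, hab, c, hc, hbc⟩
    obtain ⟨i, hi, rfl⟩ := getElem_of_mem hc
    refine ⟨i, p.length, hi, by simp, ?_, ?_⟩
    · simpa [getD_append_right] using hab
    · rw [getD_append _ _ _ _ hi, getD_eq_getElem _ _ hi, getD_append_right _ _ _ _ (by omega)]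
      simpa using hbc

theorem sortedLT_map_head!_descRuns {l : List ℕ} (hl : l.Nodup) (hocc : ¬ Occ312 l) :
    ((descRuns l).map head!).SortedLT := by
  rw [sortedLT_iff_isChain, isChain_map, isChain_iff_forall_rel_of_append_cons_cons]
  intro b c B₁ B₂ hB
  have hbB : b ∈ descRuns l := by simp [hB]
  have hcB : c ∈ descRuns l := by simp [hB]
  obtain ⟨b₀, z, rfl⟩ : ∃ b₀ z, b = b₀ ++ [z] :=
    ⟨_, _, (dropLast_append_getLast (ne_of_mem_of_not_mem hbB (nil_notMem_descRuns l))).symm⟩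
  obtain ⟨y, c, rfl⟩ := exists_cons_of_ne_nil (ne_of_mem_of_not_mem hcB (nil_notMem_descRuns l))
  have hjunction : ¬ y < z := by
    have := isChain_getLast_head_splitBy (fun a b => decide (b < a)) l
    rw [← descRuns, hB, isChain_append_cons_cons] at this
    simpa using this.2.1
  have hy : y ∉ b₀ ++ [z] := by
    have := pairwise_disjoint_descRuns hl
    rw [hB] at this
    exact fun h => pairwise_pair.mp (this.sublist (show [b₀ ++ [z], y :: c] <+ _ by simp)) h
      mem_cons_self
  by_contra! hle
  have hhead := head!_mem_self (l := b₀ ++ [z]) (by simp)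
  have hyx : y < (b₀ ++ [z]).head! := lt_of_le_of_ne hle (ne_of_mem_of_not_mem hhead hy).symm
  have hzy : z < y := lt_of_le_of_ne (not_lt.mp hjunction) (by rintro rfl; simp at hy)
  refine hocc <| occ312_iff.mpr
    ⟨B₁.flatten ++ b₀, z, y, c ++ B₂.flatten, ?_, hzy, _, ?_, hyx⟩
  · rw [← flatten_descRuns l, hB]; simp
  · have : (b₀ ++ [z]).head! ≠ z := (hzy.trans hyx).ne'
    simp_all

theorem not_occ312_of_sortedLT_map_head! {l : List ℕ}
    (hsorted : ((descRuns l).map head!).SortedLT) : ¬ Occ312 l := by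
  intro hocc
  obtain ⟨p, a, b, s, hps, hab, c, hc, hbc⟩ := occ312_iff.mp hocc
  rw [← flatten_descRuns l] at hps
  obtain ⟨B₁, B₂, hB, h₁, h₂⟩ :=
    exists_eq_append_of_flatten_eq_of_lt (fun r hr => sortedGT_of_mem_descRuns hr) hps hab
  obtain _ | ⟨_ | ⟨x, C⟩, B₂⟩ := B₂
  · simp at h₂
  · exact nil_notMem_descRuns l (by simp [hB])
  obtain ⟨rfl, -⟩ : x = b ∧ _ := by simpa using h₂
  obtain ⟨D, hD, hcD⟩ := mem_flatten.mp (h₁ ▸ mem_append_left [a] hc : c ∈ B₁.flatten)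
  have hDb : D.head! < x := by
    have := sortedLT_iff_pairwise.mp hsorted
    rw [hB, map_append, pairwise_append] at this
    exact this.2.2 _ (mem_map_of_mem hD) _ (by simp)
  have hcD : c ≤ D.head! := (sortedGT_of_mem_descRuns (l := l) (by simp [hB, hD])).le_head! hcD
  exact (hbc.trans_le hcD).not_gt hDb

theorem not_occ312_iff {l : List ℕ} (hl : l.Nodup) :
    ¬ Occ312 l ↔ ((descRuns l).map head!).SortedLT :=
  ⟨sortedLT_map_head!_descRuns hl, not_occ312_of_sortedLT_map_head!⟩

theorem isPermOf_iff {n : ℕ} {l : List ℕ} :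
    IsPermOf n l ↔ l.Nodup ∧ ∀ v, v ∈ l ↔ ∃ k : Fin n, (k : ℕ) + 1 = v := by
  have hnd : ((List.range n).map (· + 1)).Nodup := nodup_range.map fun _ _ => Nat.add_right_cancel
  refine ⟨fun h => ⟨h.nodup_iff.mpr hnd, fun v => ?_⟩, fun ⟨hl, hv⟩ => ?_⟩
  · rw [h.mem_iff]; simp [Fin.exists_iff]
  · refine (perm_ext_iff_of_nodup hl hnd).mpr fun v => ?_
    rw [hv]; simp [Fin.exists_iff]

section Blocks

variable {n : ℕ}

def toValues (s : Finset (Fin n)) : List ℕ :=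
  ((s.image fun k : Fin n => (k : ℕ) + 1).sort).reverse

def ofValues (n : ℕ) (r : List ℕ) : Finset (Fin n) :=
  {k | (k : ℕ) + 1 ∈ r}

theorem mem_toValues {s : Finset (Fin n)} {v : ℕ} :
    v ∈ toValues s ↔ ∃ k ∈ s, (k : ℕ) + 1 = v := by
  simp [toValues]

theorem mem_ofValues {r : List ℕ} {k : Fin n} : k ∈ ofValues n r ↔ (k : ℕ) + 1 ∈ r := by
  simp [ofValues]

theorem sortedGT_toValues (s : Finset (Fin n)) : (toValues s).SortedGT := by
  simpa [toValues] using Finset.sortedLT_sort _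

theorem toValues_ne_nil {s : Finset (Fin n)} (hs : s.Nonempty) : toValues s ≠ [] := by
  obtain ⟨k, hk⟩ := hs
  exact ne_nil_of_mem (mem_toValues.mpr ⟨k, hk, rfl⟩)

theorem ofValues_toValues (s : Finset (Fin n)) : ofValues n (toValues s) = s := by
  ext k
  simp [mem_ofValues, mem_toValues, Fin.val_inj]

theorem toValues_ofValues {r : List ℕ} (hr : r.SortedGT)
    (hv : ∀ v ∈ r, ∃ k : Fin n, (k : ℕ) + 1 = v) : toValues (ofValues n r) = r := by
  refine (sortedGT_toValues _).eq_of_mem_iff hr fun v => ⟨fun h => ?_, fun h => ?_⟩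
  · obtain ⟨k, hk, rfl⟩ := mem_toValues.mp h
    exact mem_ofValues.mp hk
  · obtain ⟨k, rfl⟩ := hv v h
    exact mem_toValues.mpr ⟨k, mem_ofValues.mpr h, rfl⟩

variable (P : Finpartition (Finset.univ : Finset (Fin n)))

-- On decreasing lists with distinct heads, the lexicographic order compares the maxima.
def blocks : List (List ℕ) :=
  (P.parts.image toValues).sort

variable {P}

theorem mem_blocks {b : List ℕ} : b ∈ blocks P ↔ ∃ s ∈ P.parts, toValues s = b := by
  simp [blocks]

theorem nil_notMem_blocks : [] ∉ blocks P := fun h => by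
  obtain ⟨s, hs, h⟩ := mem_blocks.mp h
  exact toValues_ne_nil (P.nonempty_of_mem_parts hs) h

theorem pairwise_disjoint_blocks : (blocks P).Pairwise List.Disjoint := by
  refine (Finset.sort_nodup _ _).imp_of_mem fun {b c} hb hc hbc v hvb hvc => ?_
  obtain ⟨s, hs, rfl⟩ := mem_blocks.mp hb
  obtain ⟨t, ht, rfl⟩ := mem_blocks.mp hc
  obtain ⟨k, hks, rfl⟩ := mem_toValues.mp hvb
  obtain ⟨k', hkt, hk⟩ := mem_toValues.mp hvc
  obtain rfl : k' = k := Fin.ext (by omega)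
  exact hbc (congrArg toValues (P.eq_of_mem_parts hs ht hks hkt))

theorem sortedLT_map_head!_blocks : ((blocks P).map head!).SortedLT :=
  (sortedLT_map_head!_iff nil_notMem_blocks pairwise_disjoint_blocks).mpr
    (Finset.pairwise_sort _ _)

theorem isPermOf_flatten_blocks : IsPermOf n (blocks P).flatten := by
  refine isPermOf_iff.mpr
    ⟨nodup_flatten.mpr ⟨fun b hb => ?_, pairwise_disjoint_blocks⟩, fun v => ?_⟩
  · obtain ⟨s, -, rfl⟩ := mem_blocks.mp hb
    exact (sortedGT_toValues s).nodup
  · simp only [mem_flatten, mem_blocks]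
    constructor
    · rintro ⟨-, ⟨s, -, rfl⟩, hv⟩
      obtain ⟨k, -, rfl⟩ := mem_toValues.mp hv
      exact ⟨k, rfl⟩
    · rintro ⟨k, rfl⟩
      obtain ⟨s, hs, hks⟩ := P.exists_mem (Finset.mem_univ k)
      exact ⟨_, ⟨s, hs, rfl⟩, mem_toValues.mpr ⟨k, hks, rfl⟩⟩

theorem descRuns_flatten_blocks : descRuns (blocks P).flatten = blocks P := by
  refine descRuns_flatten nil_notMem_blocks (fun b hb => ?_) sortedLT_map_head!_blocks
  obtain ⟨s, -, rfl⟩ := mem_blocks.mp hb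
  exact sortedGT_toValues s

theorem not_occ312_flatten_blocks : ¬ Occ312 (blocks P).flatten := by
  rw [not_occ312_iff (isPermOf_iff.mp isPermOf_flatten_blocks).1, descRuns_flatten_blocks]
  exact sortedLT_map_head!_blocks

section Runs

variable {l : List ℕ}

theorem exists_fin_of_mem_descRuns (hl : IsPermOf n l) {r : List ℕ} (hr : r ∈ descRuns l)
    {v : ℕ} (hv : v ∈ r) : ∃ k : Fin n, (k : ℕ) + 1 = v :=
  (isPermOf_iff.mp hl).2 v |>.mp (mem_of_mem_descRuns hr hv)

theorem toValues_ofValues_of_mem_descRuns (hl : IsPermOf n l) {r : List ℕ}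
    (hr : r ∈ descRuns l) : toValues (ofValues n r) = r :=
  toValues_ofValues (sortedGT_of_mem_descRuns hr) fun _ => exists_fin_of_mem_descRuns hl hr

theorem existsUnique_mem_ofValues_descRuns (hl : IsPermOf n l) (k : Fin n) :
    ∃! t, t ∈ ((descRuns l).map (ofValues n)).toFinset ∧ k ∈ t := by
  obtain ⟨r, hr, hkr⟩ := mem_flatten.mp
    ((flatten_descRuns l).symm ▸ (isPermOf_iff.mp hl).2 _ |>.mpr ⟨k, rfl⟩)
  refine ⟨ofValues n r, ⟨by simpa using ⟨r, hr, rfl⟩, mem_ofValues.mpr hkr⟩, ?_⟩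
  rintro t ⟨ht, hkt⟩
  obtain ⟨r', hr', rfl⟩ := by simpa using ht
  rw [eq_of_mem_descRuns (isPermOf_iff.mp hl).1 hr hr' hkr (mem_ofValues.mp hkt)]

theorem empty_notMem_ofValues_descRuns (hl : IsPermOf n l) :
    ∅ ∉ ((descRuns l).map (ofValues n)).toFinset := by
  intro h
  obtain ⟨r, hr, hempty⟩ := by simpa using h
  have hhead := head!_mem_self (ne_of_mem_of_not_mem hr (nil_notMem_descRuns l))
  obtain ⟨k, hk⟩ := exists_fin_of_mem_descRuns hl hr hhead
  exact Finset.notMem_empty k (hempty ▸ mem_ofValues.mpr (hk ▸ hhead))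

def runPartition (l : List ℕ) (hl : IsPermOf n l) : Finpartition (Finset.univ : Finset (Fin n)) :=
  .ofExistsUnique ((descRuns l).map (ofValues n)).toFinset (fun _ _ => Finset.subset_univ _)
    (fun k _ => existsUnique_mem_ofValues_descRuns hl k) (empty_notMem_ofValues_descRuns hl)

theorem flatten_blocks_runPartition (hl : IsPermOf n l) (hocc : ¬ Occ312 l) :
    (blocks (runPartition l hl)).flatten = l := by
  have hnd := (isPermOf_iff.mp hl).1
  have himage : (runPartition l hl).parts.image toValues = (descRuns l).toFinset := by
    ext b
    simp only [runPartition, Finpartition.ofExistsUnique_parts, Finset.mem_image, mem_toFinset,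
      mem_map]
    constructor
    · rintro ⟨-, ⟨r, hr, rfl⟩, rfl⟩
      rwa [toValues_ofValues_of_mem_descRuns hl hr]
    · exact fun hb => ⟨_, ⟨b, hb, rfl⟩, toValues_ofValues_of_mem_descRuns hl hb⟩
  have hsorted : (descRuns l).Pairwise (· ≤ ·) :=
    (sortedLT_map_head!_iff (nil_notMem_descRuns l) (pairwise_disjoint_descRuns hnd)).mp
      ((not_occ312_iff hnd).mp hocc)
  rw [blocks, himage, (toFinset_sort _ (nodup_descRuns hnd)).mpr hsorted, flatten_descRuns]

end Runs

theorem runPartition_flatten_blocks (P : Finpartition (Finset.univ : Finset (Fin n))) :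
    runPartition (blocks P).flatten isPermOf_flatten_blocks = P := by
  refine Finpartition.ext (Finset.ext fun s => ?_)
  simp [runPartition, descRuns_flatten_blocks, mem_blocks, ofValues_toValues]

variable (n) in
def avoidersEquivFinpartition : {l : List ℕ // IsPermOf n l ∧ ¬ Occ312 l} ≃
    Finpartition (Finset.univ : Finset (Fin n)) where
  toFun l := runPartition l.1 l.2.1
  invFun P := ⟨(blocks P).flatten, isPermOf_flatten_blocks, not_occ312_flatten_blocks⟩
  left_inv l := Subtype.ext (flatten_blocks_runPartition l.2.1 l.2.2)
  right_inv := runPartition_flatten_blocks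

end Blocks

/-- `(3-12)`-avoiding permutations of `{1,…,n}` are in bijection with set partitions
of `{1,…,n}`; in particular they are counted by the `n`-th Bell number, i.e. by the
number of set partitions of an `n`-element set. -/
theorem avoid_312_bij_partitions (n : ℕ) :
    Nonempty ({l : List ℕ // IsPermOf n l ∧ ¬ Occ312 l} ≃
      Finpartition (Finset.univ : Finset (Fin n))) ∧
    Nat.card {l : List ℕ // IsPermOf n l ∧ ¬ Occ312 l} =
      Nat.card (Finpartition (Finset.univ : Finset (Fin n))) :=
  ⟨⟨avoidersEquivFinpartition n⟩, Nat.card_congr (avoidersEquivFinpartition n)⟩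
end

section
/- If π = M_1 π_1 M_2 π_2 ... M_i π_i with M_1,...,M_i the left-to-right maxima of π, then ψ(π) = π_i M_i ... π_2 M_2 π_1 M_1. -/
/-- `ψ` satisfies the defining recursion `ψ(∅) = ∅` and
`ψ(π_ℓ n π_r) = π_r n ψ(π_ℓ)`, where `n` is the largest entry. -/
def PsiSpec (ψ : List ℕ → List ℕ) : Prop :=
  ψ [] = [] ∧
  ∀ (l r : List ℕ) (n : ℕ), (∀ x ∈ l ++ r, x < n) → ψ (l ++ n :: r) = r ++ n :: ψ l

/-! Induction on the number of left-to-right maxima: the last one, `Mᵢ`, is the largest entry,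
so one step of the recursion for `ψ` moves `Mᵢπᵢ` to the front as `πᵢMᵢ`. -/

theorem List.flatten_ofFn_succ_eq_append {α : Type*} {n : ℕ} (f : Fin (n + 1) → List α) :
    (List.ofFn f).flatten = (List.ofFn fun j : Fin n => f j.castSucc).flatten ++ f (Fin.last n) := by
  rw [List.ofFn_succ', List.concat_eq_append, List.flatten_append, List.flatten_singleton]

theorem List.flatten_ofFn_succ_eq_cons {α : Type*} {n : ℕ} (f : Fin (n + 1) → List α) :
    (List.ofFn f).flatten = f 0 ++ (List.ofFn fun j : Fin n => f j.succ).flatten := by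
  rw [List.ofFn_succ, List.flatten_cons]

theorem lt_last_of_mem_flatten_ofFn_init {n : ℕ} {M : Fin (n + 1) → ℕ} {B : Fin (n + 1) → List ℕ}
    (hM : StrictMono M) (hB : ∀ j' j, j' ≤ j → ∀ x ∈ B j', x < M j) {x : ℕ}
    (hx : x ∈ (List.ofFn fun j : Fin n => M j.castSucc :: B j.castSucc).flatten) :
    x < M (Fin.last n) := by
  obtain ⟨l, hl, hxl⟩ := List.mem_flatten.1 hx
  obtain ⟨j, rfl⟩ := List.mem_ofFn.1 hl
  rcases List.mem_cons.1 hxl with rfl | hxB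
  · exact hM (Fin.castSucc_lt_last j)
  · exact hB j.castSucc (Fin.last n) (Fin.le_last _) x hxB

namespace PsiSpec

variable {ψ : List ℕ → List ℕ}

theorem apply_flatten_ofFn (hψ : PsiSpec ψ) {i : ℕ} {M : Fin i → ℕ} {B : Fin i → List ℕ}
    (hM : StrictMono M) (hB : ∀ j' j, j' ≤ j → ∀ x ∈ B j', x < M j) :
    ψ (List.ofFn fun j => M j :: B j).flatten =
      (List.ofFn fun j : Fin i => B j.rev ++ [M j.rev]).flatten := by
  induction i with
  | zero => simpa using hψ.1
  | succ n ih =>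
    have hmax : ∀ x ∈ (List.ofFn fun j : Fin n => M j.castSucc :: B j.castSucc).flatten ++
        B (Fin.last n), x < M (Fin.last n) := by
      intro x hx
      rcases List.mem_append.1 hx with hx | hx
      · exact lt_last_of_mem_flatten_ofFn_init hM hB hx
      · exact hB _ _ le_rfl x hx
    have hinit := ih (M := fun j => M j.castSucc) (hM.comp Fin.strictMono_castSucc)
      (fun j' j h => hB j'.castSucc j.castSucc (Fin.castSucc_le_castSucc_iff.2 h))
    rw [List.flatten_ofFn_succ_eq_append, hψ.2 _ _ _ hmax, hinit,
      List.flatten_ofFn_succ_eq_cons]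
    simp [Fin.rev_succ]

end PsiSpec

theorem psi_of_lr_max_decomposition_general (ψ : List ℕ → List ℕ) (hψ : PsiSpec ψ)
    (i : ℕ) (M : Fin i → ℕ) (B : Fin i → List ℕ) (π : List ℕ)
    (hπ : π = (List.ofFn fun j => M j :: B j).flatten)
    (hM : StrictMono M)
    (hB : ∀ j' j : Fin i, j' ≤ j → ∀ x ∈ B j', x < M j) :
    ψ π = (List.ofFn fun j : Fin i => B j.rev ++ [M j.rev]).flatten := by
  subst hπ
  exact hψ.apply_flatten_ofFn hM hB

/-- If `π = M₁π₁M₂π₂⋯Mᵢπᵢ` with the `Mⱼ` the left-to-right maxima of `π`,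
then `ψ(π) = πᵢMᵢ⋯π₂M₂π₁M₁`. -/
theorem psi_of_lr_max_decomposition (ψ : List ℕ → List ℕ) (hψ : PsiSpec ψ)
    (N i : ℕ) (M : Fin i → ℕ) (B : Fin i → List ℕ) (π : List ℕ)
    (hπ : π = (List.ofFn fun j => M j :: B j).flatten)
    (hperm : IsPermOf N π)
    (hM : StrictMono M)
    (hB : ∀ j' j : Fin i, j' ≤ j → ∀ x ∈ B j', x < M j) :
    ψ π = (List.ofFn fun j : Fin i => B j.rev ++ [M j.rev]).flatten :=
  psi_of_lr_max_decomposition_general ψ hψ i M B π hπ hM hB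
end

section
/- For every permutation π, the set of left-to-right maxima of π equals the set of right-to-left maxima of ψ(π). -/
/-- The set of values of left-to-right maxima of `l`. -/
def LMAX (l : List ℕ) : Set ℕ :=
  {x | ∃ i < l.length, l.getD i 0 = x ∧ ∀ j < i, l.getD j 0 < x}

/-- The set of values of right-to-left maxima of `l`. -/
def RMAX (l : List ℕ) : Set ℕ :=
  {x | ∃ i < l.length, l.getD i 0 = x ∧ ∀ j, i < j → j < l.length → l.getD j 0 < x}

namespace List.Nodup

variable {α : Type*} [LinearOrder α]

theorem exists_eq_append_cons_forall_lt {l : List α} (hl : l.Nodup) (hne : l ≠ []) :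
    ∃ a m b, l = a ++ m :: b ∧ ∀ x ∈ a ++ b, x < m := by
  obtain ⟨m, hm⟩ := Option.ne_none_iff_exists'.mp (mt List.max?_eq_none_iff.mp hne)
  obtain ⟨hmem, hle⟩ := List.max?_eq_some_iff.mp hm
  obtain ⟨a, b, rfl⟩ := List.append_of_mem hmem
  have hm_notMem : m ∉ a ++ b := (List.nodup_cons.mp (List.nodup_middle.mp hl)).1
  refine ⟨a, m, b, rfl, fun x hx => (hle x ?_).lt_of_ne (ne_of_mem_of_not_mem hx hm_notMem)⟩
  exact List.perm_middle.symm.subset (List.mem_cons_of_mem m hx)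

theorem induction_on_max {P : List α → Prop} (nil : P [])
    (split : ∀ a m b, a.Nodup → (∀ x ∈ a ++ b, x < m) → P a → P (a ++ m :: b)) :
    ∀ {l : List α}, l.Nodup → P l := by
  intro l hl
  induction hlen : l.length using Nat.strong_induction_on generalizing l with
  | _ N ih =>
    rcases eq_or_ne l [] with rfl | hne
    · exact nil
    obtain ⟨a, m, b, rfl, hlt⟩ := hl.exists_eq_append_cons_forall_lt hne
    have ha : a.Nodup := (List.nodup_append.mp hl).1
    exact split a m b ha hlt (ih a.length (by simp [← hlen]) ha rfl)

end List.Nodup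

theorem List.forall_lt_length_getD_iff {α : Type*} {l : List α} {d : α} {p : α → Prop} :
    (∀ j < l.length, p (l.getD j d)) ↔ ∀ z ∈ l, p z := by
  rw [List.forall_mem_iff_getElem]
  exact forall₂_congr fun j hj => by rw [List.getD_eq_getElem _ _ hj]

@[simp]
theorem LMAX_nil : LMAX [] = ∅ := by
  simp [LMAX]

@[simp]
theorem RMAX_nil : RMAX [] = ∅ := by
  simp [RMAX]

theorem mem_of_mem_LMAX {l : List ℕ} {x : ℕ} (hx : x ∈ LMAX l) : x ∈ l := by
  obtain ⟨i, hi, rfl, -⟩ := hx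
  rw [List.getD_eq_getElem _ _ hi]
  exact List.getElem_mem hi

theorem LMAX_cons (x : ℕ) (l : List ℕ) : LMAX (x :: l) = insert x {y ∈ LMAX l | x < y} := by
  ext y
  simp only [LMAX, List.length_cons, Nat.exists_lt_succ_left, Nat.forall_lt_succ_left,
    List.getD_cons_zero, List.getD_cons_succ, Set.mem_insert_iff, Set.mem_ofPred_eq]
  grind

theorem RMAX_cons (x : ℕ) (l : List ℕ) :
    RMAX (x :: l) = {y | y = x ∧ ∀ z ∈ l, z < x} ∪ RMAX l := by
  ext y
  have shift (i : ℕ) : (∀ j, i < j → j < l.length + 1 → (x :: l).getD j 0 < y) ↔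
      ∀ j, i ≤ j → j < l.length → l.getD j 0 < y := by
    refine ⟨fun h j hij hj => h (j + 1) (by omega) (by omega), fun h j hij hj => ?_⟩
    obtain ⟨k, rfl⟩ : ∃ k, j = k + 1 := ⟨j - 1, by omega⟩
    exact h k (by omega) (by omega)
  simp only [RMAX, List.length_cons, Nat.exists_lt_succ_left, List.getD_cons_zero,
    List.getD_cons_succ, Set.mem_union, Set.mem_ofPred_eq, shift, zero_le, true_imp_iff,
    List.forall_lt_length_getD_iff (p := (· < y)), Nat.add_one_le_iff]
  grind

theorem LMAX_append_cons_of_forall_lt {a b : List ℕ} {m : ℕ} (h : ∀ x ∈ a ++ b, x < m) :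
    LMAX (a ++ m :: b) = insert m (LMAX a) := by
  induction a with
  | nil =>
    have hb : ∀ y ∈ LMAX b, ¬m < y := fun y hy =>
      (h y (by simpa using mem_of_mem_LMAX hy)).asymm
    ext y
    simp only [List.nil_append, LMAX_cons, LMAX_nil, Set.mem_insert_iff, Set.mem_sep_iff]
    grind
  | cons x a ih =>
    have hxm : x < m := h x (by simp)
    rw [List.cons_append, LMAX_cons, ih fun y hy => h y (by simp [hy]), LMAX_cons]
    ext y
    simp only [Set.mem_insert_iff, Set.mem_sep_iff]
    grind

theorem RMAX_append_cons_of_forall_lt {b c : List ℕ} {m : ℕ} (h : ∀ x ∈ b ++ c, x < m) :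
    RMAX (b ++ m :: c) = insert m (RMAX c) := by
  induction b with
  | nil =>
    have hc : ∀ z ∈ c, z < m := fun z hz => h z (by simp [hz])
    ext y
    simp only [List.nil_append, RMAX_cons, Set.mem_union, Set.mem_insert_iff, Set.mem_ofPred_eq]
    tauto
  | cons x b ih =>
    have hxm : ¬m < x := (h x (by simp)).asymm
    rw [List.cons_append, RMAX_cons, ih fun y hy => h y (by simp [hy])]
    simp [or_imp, forall_and, hxm]

section PsiSpec

variable {ψ : List ℕ → List ℕ}

open List in
theorem PsiSpec.perm (hψ : PsiSpec ψ) {l : List ℕ} (hl : l.Nodup) : (ψ l).Perm l := by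
  refine hl.induction_on_max (P := fun l => (ψ l).Perm l) (by rw [hψ.1]) ?_
  intro a m b _ hlt ha
  rw [hψ.2 a b m hlt]
  calc b ++ m :: ψ a ~ m :: (b ++ ψ a) := List.perm_middle
    _ ~ m :: (a ++ b) := ((ha.append_left b).trans List.perm_append_comm).cons m
    _ ~ a ++ m :: b := List.perm_middle.symm

theorem PsiSpec.LMAX_eq_RMAX (hψ : PsiSpec ψ) {l : List ℕ} (hl : l.Nodup) :
    LMAX l = RMAX (ψ l) := by
  refine hl.induction_on_max (P := fun l => LMAX l = RMAX (ψ l)) (by simp [hψ.1]) ?_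
  intro a m b ha hlt ih
  have hψa : ∀ x ∈ b ++ ψ a, x < m := by
    intro x hx
    exact hlt x (by simpa [(hψ.perm ha).mem_iff, or_comm] using hx)
  rw [hψ.2 a b m hlt, LMAX_append_cons_of_forall_lt hlt, RMAX_append_cons_of_forall_lt hψa,
    ih]

end PsiSpec

theorem lmax_eq_rmax_psi (ψ : List ℕ → List ℕ) (hψ : PsiSpec ψ)
    (n : ℕ) (π : List ℕ) (hperm : IsPermOf n π) :
    LMAX π = RMAX (ψ π) :=
  hψ.LMAX_eq_RMAX (hperm.nodup_iff.mpr (List.nodup_range.map (add_left_injective 1)))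
end

section
/- A permutation π avoids the pattern k-σ if and only if ψ(π) avoids the pattern σ-k, where σ is a contiguous pattern and k is greater than all letters of σ. Consequently ψ restricts to a bijection between (k-σ)-avoiding and (σ-k)-avoiding permutations of each length. -/
/-!
Write `π = π_ℓ n π_r` with `n` the largest entry. No occurrence of `σ` in the patterns `k-σ`
or `σ-k` contains `n`, since its entries lie below another entry; so `π` contains `k-σ` iff
`π_ℓ` does or `π_r` contains `σ` consecutively (then `n` serves as `k`), and dually
`π_r n q` contains `σ-k` iff `π_r` contains `σ` consecutively or `q` contains `σ-k`.
As `ψ(π) = π_r n ψ(π_ℓ)`, induction on the maximum gives the equivalence. `ψ` is a bijection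
because `π_r` and `ψ(π_ℓ)` are recovered from `ψ(π)` by locating its maximum, which is `n`.
-/

def OccursConsecutively (σ π : List ℕ) : Prop :=
  ∃ B w C, π = B ++ w ++ C ∧ FormsPOP σ w

theorem IsPermOf.nodup_s8 {n : ℕ} {l : List ℕ} (h : IsPermOf n l) : l.Nodup :=
  h.nodup_iff.mpr (List.nodup_range.map (add_left_injective 1))

section MaximalEntry

variable {l r : List ℕ} {n : ℕ}

theorem le_of_mem_append_cons (hn : ∀ x ∈ l ++ r, x < n) {x : ℕ} (hx : x ∈ l ++ n :: r) :
    x ≤ n := by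
  rcases List.mem_cons.mp (List.perm_middle.mem_iff.mp hx) with rfl | hx
  exacts [le_rfl, (hn x hx).le]

theorem notMem_left_of_forall_lt (hn : ∀ x ∈ l ++ r, x < n) : n ∉ l :=
  fun h => lt_irrefl n (hn n (List.mem_append_left r h))

theorem notMem_right_of_forall_lt (hn : ∀ x ∈ l ++ r, x < n) : n ∉ r :=
  fun h => lt_irrefl n (hn n (List.mem_append_right l h))

theorem exists_right_eq_append_of_mem_left (hn : ∀ x ∈ l ++ r, x < n) {P Q : List ℕ}
    (h : l ++ n :: r = P ++ Q) (hP : n ∈ P) : ∃ P', r = P' ++ Q := by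
  obtain ⟨P₁, P', rfl⟩ := List.append_of_mem hP
  have h' : l ++ n :: r = P₁ ++ n :: (P' ++ Q) := by simpa using h
  exact ⟨P', ((List.append_cons_inj_of_notMem (notMem_left_of_forall_lt hn)
    (notMem_right_of_forall_lt hn)).mp h').2.2⟩

theorem exists_left_eq_append_of_mem_right (hn : ∀ x ∈ l ++ r, x < n) {P Q : List ℕ}
    (h : l ++ n :: r = P ++ Q) (hQ : n ∈ Q) : ∃ Q', l = P ++ Q' := by
  obtain ⟨Q', Q₂, rfl⟩ := List.append_of_mem hQ
  have h' : l ++ n :: r = (P ++ Q') ++ n :: Q₂ := by simpa using h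
  exact ⟨Q', ((List.append_cons_inj_of_notMem (notMem_left_of_forall_lt hn)
    (notMem_right_of_forall_lt hn)).mp h').1⟩

theorem occursKS_append_cons_iff_s8 {σ : List ℕ} (hn : ∀ x ∈ l ++ r, x < n) :
    OccursKS σ (l ++ n :: r) ↔ OccursKS σ l ∨ OccursConsecutively σ r := by
  constructor
  · rintro ⟨A, x, B, w, C, hπ, hw, hwx⟩
    have hnw : n ∉ w := fun h => (hwx n h).not_ge (le_of_mem_append_cons hn (by simp [hπ]))
    have hmem : n ∈ A ++ x :: (B ++ w ++ C) := by rw [← hπ]; simp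
    have hsplit : n ∈ A ++ x :: B ∨ n ∈ C := by
      simp only [List.mem_append, List.mem_cons] at hmem ⊢; tauto
    rcases hsplit with hP | hQ
    · obtain ⟨P, rfl⟩ := exists_right_eq_append_of_mem_left hn
        (hπ.trans (by simp) : l ++ n :: r = (A ++ x :: B) ++ (w ++ C)) hP
      exact Or.inr ⟨P, w, C, by simp, hw⟩
    · obtain ⟨Q, rfl⟩ := exists_left_eq_append_of_mem_right hn
        (hπ.trans (by simp) : l ++ n :: r = (A ++ x :: (B ++ w)) ++ C) hQ
      exact Or.inl ⟨A, x, B, w, Q, by simp, hw, hwx⟩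
  · rintro (⟨A, x, B, w, C, rfl, hw, hwx⟩ | ⟨B, w, C, rfl, hw⟩)
    · exact ⟨A, x, B, w, C ++ n :: r, by simp, hw, hwx⟩
    · exact ⟨l, n, B, w, C, rfl, hw, fun y hy => hn y (by simp [hy])⟩

theorem occursSK_append_cons_iff {σ : List ℕ} (hn : ∀ x ∈ l ++ r, x < n) :
    OccursSK σ (l ++ n :: r) ↔ OccursConsecutively σ l ∨ OccursSK σ r := by
  constructor
  · rintro ⟨A, w, B, x, C, hπ, hw, hwx⟩
    have hnw : n ∉ w := fun h => (hwx n h).not_ge (le_of_mem_append_cons hn (by simp [hπ]))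
    have hmem : n ∈ A ++ w ++ B ++ x :: C := by rw [← hπ]; simp
    have hsplit : n ∈ A ∨ n ∈ B ++ x :: C := by
      simp only [List.mem_append, List.mem_cons] at hmem ⊢; tauto
    rcases hsplit with hP | hQ
    · obtain ⟨P, rfl⟩ := exists_right_eq_append_of_mem_left hn
        (hπ.trans (by simp) : l ++ n :: r = A ++ (w ++ B ++ x :: C)) hP
      exact Or.inr ⟨P, w, B, x, C, by simp, hw, hwx⟩
    · obtain ⟨Q, rfl⟩ := exists_left_eq_append_of_mem_right hn
        (hπ.trans (by simp) : l ++ n :: r = (A ++ w) ++ (B ++ x :: C)) hQ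
      exact Or.inl ⟨A, w, Q, rfl, hw⟩
  · rintro (⟨A, w, B, rfl, hw⟩ | ⟨A, w, B, x, C, rfl, hw, hwx⟩)
    · exact ⟨A, w, B, n, r, by simp, hw, fun y hy => hn y (by simp [hy])⟩
    · exact ⟨l ++ n :: A, w, B, x, C, by simp, hw, hwx⟩

theorem exists_eq_append_cons_forall_lt {π : List ℕ} (hne : π ≠ []) (hnd : π.Nodup) :
    ∃ l n r, π = l ++ n :: r ∧ ∀ x ∈ l ++ r, x < n := by
  obtain ⟨l, r, hπ⟩ := List.append_of_mem (List.max_mem hne)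
  refine ⟨l, π.max hne, r, hπ, fun x hx => lt_of_le_of_ne ?_ ?_⟩
  · exact List.le_max_of_mem (by rw [hπ]; exact List.perm_middle.mem_iff.mpr (.tail _ hx))
  · rintro rfl
    rw [hπ, List.nodup_middle, List.nodup_cons] at hnd
    exact hnd.1 hx

end MaximalEntry

theorem nodup_induction_on_max {P : List ℕ → Prop} (nil : P [])
    (step : ∀ l n r, (∀ x ∈ l ++ r, x < n) → (l ++ n :: r).Nodup → P l → P r → P (l ++ n :: r))
    (π : List ℕ) (hπ : π.Nodup) : P π := by
  induction hlen : π.length using Nat.strong_induction_on generalizing π with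
  | _ N ih =>
  rcases eq_or_ne π [] with rfl | hne
  · exact nil
  obtain ⟨l, n, r, rfl, hn⟩ := exists_eq_append_cons_forall_lt hne hπ
  refine step l n r hn hπ (ih _ ?_ l hπ.of_append_left rfl)
    (ih _ ?_ r hπ.of_append_right.of_cons rfl)
  all_goals simp only [← hlen, List.length_append, List.length_cons]; omega

namespace PsiSpec

variable {ψ : List ℕ → List ℕ}

theorem perm_s8 (hψ : PsiSpec ψ) : ∀ π : List ℕ, π.Nodup → (ψ π).Perm π :=
  nodup_induction_on_max (by rw [hψ.1]) fun l n r hn _ hl _ => by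
    rw [hψ.2 l r n hn]
    exact ((hl.cons n).append_left r).trans (List.perm_append_comm.trans List.perm_middle.symm)

theorem forall_lt_append (hψ : PsiSpec ψ) {l r : List ℕ} {n : ℕ} (hl : l.Nodup)
    (hn : ∀ x ∈ l ++ r, x < n) : ∀ x ∈ r ++ ψ l, x < n :=
  fun x hx => hn x ((((hψ.perm_s8 l hl).append_left r).trans List.perm_append_comm).mem_iff.mp hx)

theorem occursKS_iff_occursSK (hψ : PsiSpec ψ) (σ : List ℕ) :
    ∀ π : List ℕ, π.Nodup → (OccursKS σ π ↔ OccursSK σ (ψ π)) :=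
  nodup_induction_on_max (by simp [hψ.1, OccursKS, OccursSK]) fun l n r hn hnd ih _ => by
    rw [hψ.2 l r n hn, occursKS_append_cons_iff_s8 hn,
      occursSK_append_cons_iff (hψ.forall_lt_append hnd.of_append_left hn), ih, or_comm]

theorem exists_eq_append_cons_of_apply_eq (hψ : PsiSpec ψ) {π r q : List ℕ} {n : ℕ}
    (hπ : π.Nodup) (hn : ∀ x ∈ r ++ q, x < n) (h : ψ π = r ++ n :: q) :
    ∃ l, π = l ++ n :: r ∧ ψ l = q := by
  have hne : π ≠ [] := by rintro rfl; simp [hψ.1] at h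
  obtain ⟨l, m, r', rfl, hm⟩ := exists_eq_append_cons_forall_lt hne hπ
  have hm' := hψ.forall_lt_append hπ.of_append_left hm
  rw [hψ.2 l r' m hm] at h
  have hmn : m = n := le_antisymm (le_of_mem_append_cons hn (by simp [← h]))
    (le_of_mem_append_cons hm' (by simp [h]))
  subst hmn
  obtain ⟨rfl, -, rfl⟩ := (List.append_cons_inj_of_notMem (notMem_left_of_forall_lt hm')
    (notMem_right_of_forall_lt hm')).mp h
  exact ⟨l, rfl, rfl⟩

theorem injOn (hψ : PsiSpec ψ) : Set.InjOn ψ {π | π.Nodup} := by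
  suffices h : ∀ π : List ℕ, π.Nodup → ∀ π' : List ℕ, π'.Nodup → ψ π' = ψ π → π' = π from
    fun π hπ π' hπ' heq => (h π hπ π' hπ' heq.symm).symm
  refine nodup_induction_on_max (fun π' hπ' heq => ?_) fun l n r hn hnd ih _ π' hπ' heq => ?_
  · simpa [heq, hψ.1] using (hψ.perm_s8 π' hπ').symm
  · rw [hψ.2 l r n hn] at heq
    obtain ⟨l', rfl, hl'⟩ :=
      hψ.exists_eq_append_cons_of_apply_eq hπ' (hψ.forall_lt_append hnd.of_append_left hn) heq
    rw [ih l' hπ'.of_append_left hl']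

theorem exists_perm_apply_eq (hψ : PsiSpec ψ) : ∀ τ : List ℕ, τ.Nodup → ∃ π, π.Perm τ ∧ ψ π = τ :=
  nodup_induction_on_max ⟨[], .rfl, hψ.1⟩ fun B m C hm _ _ ⟨π, hπ, hψπ⟩ => by
    have hm' : ∀ x ∈ π ++ B, x < m :=
      fun x hx => hm x (((hπ.append_right B).trans List.perm_append_comm).mem_iff.mp hx)
    refine ⟨π ++ m :: B, ?_, by rw [hψ.2 π B m hm', hψπ]⟩
    exact (hπ.append_right _).trans (List.perm_append_comm.trans List.perm_middle.symm)

end PsiSpec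

theorem psi_avoid_ks_iff_avoid_sk_general (ψ : List ℕ → List ℕ) (hψ : PsiSpec ψ)
    (σ : List ℕ) :
    (∀ (n : ℕ) (π : List ℕ), IsPermOf n π →
      (¬ OccursKS σ π ↔ ¬ OccursSK σ (ψ π))) ∧
    (∀ n : ℕ, Set.BijOn ψ
      {π | IsPermOf n π ∧ ¬ OccursKS σ π}
      {π | IsPermOf n π ∧ ¬ OccursSK σ π}) := by
  have hocc (n : ℕ) (π : List ℕ) (hπ : IsPermOf n π) := hψ.occursKS_iff_occursSK σ π hπ.nodup_s8
  refine ⟨fun n π hπ => not_congr (hocc n π hπ), fun n => ⟨?_, ?_, ?_⟩⟩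
  · rintro π ⟨hπ, havoid⟩
    exact ⟨(hψ.perm_s8 π hπ.nodup_s8).trans hπ, mt (hocc n π hπ).mpr havoid⟩
  · exact hψ.injOn.mono fun π hπ => hπ.1.nodup_s8
  · rintro τ ⟨hτ, havoid⟩
    obtain ⟨π, hπτ, rfl⟩ := hψ.exists_perm_apply_eq τ hτ.nodup_s8
    have hπ : IsPermOf n π := hπτ.trans hτ
    exact ⟨π, ⟨hπ, mt (hocc n π hπ).mp havoid⟩, rfl⟩

/-- A permutation `π` avoids `k-σ` iff `ψ(π)` avoids `σ-k`; consequently `ψ`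
restricts to a bijection between `(k-σ)`-avoiding and `(σ-k)`-avoiding
permutations of each length. -/
theorem psi_avoid_ks_iff_avoid_sk (ψ : List ℕ → List ℕ) (hψ : PsiSpec ψ)
    (σ : List ℕ) (hσ : σ ≠ []) :
    (∀ (n : ℕ) (π : List ℕ), IsPermOf n π →
      (¬ OccursKS σ π ↔ ¬ OccursSK σ (ψ π))) ∧
    (∀ n : ℕ, Set.BijOn ψ
      {π | IsPermOf n π ∧ ¬ OccursKS σ π}
      {π | IsPermOf n π ∧ ¬ OccursSK σ π}) :=
  psi_avoid_ks_iff_avoid_sk_general ψ hψ σ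
end

section
/- Let a_n be the number of permutations of length n avoiding 3-12-3, and B_n the n-th Bell number. Then for all n ≥ 0, a_{n+1} = Σ_{i=0}^{n} C(n,i) B_i B_{n-i}. -/
/-- Occurrence of the pattern `3-12-3` in `π`. -/
def Occ3123 (π : List ℕ) : Prop :=
  ∃ i j l, i < j ∧ j + 1 < l ∧ l < π.length ∧
    π.getD j 0 < π.getD (j + 1) 0 ∧
    π.getD (j + 1) 0 < π.getD i 0 ∧ π.getD (j + 1) 0 < π.getD l 0

/-!
Cut an arrangement of a finite set at its largest entry `m`: `π = σ ++ m :: τ`. The adjacent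
ascent `12` of an occurrence of `3-12` or `12-3` can neither contain nor straddle `m`, while `m`
can always serve as the outer `3`. Hence `π` avoids `3-12-3` iff `σ` avoids `3-12` and `τ` avoids
`12-3`; likewise `π` avoids `3-12` iff `σ` avoids `3-12` and `τ` is decreasing, and symmetrically
for `12-3`. Summing over the set of entries of `σ`, the last two statements give the Bell
recurrence for both kinds of avoiders, and the first one the formula.
-/

open Finset

theorem Nat.bell_succ_eq_sum_choose_mul_bell (n : ℕ) :
    (n + 1).bell = ∑ i ∈ range (n + 1), n.choose i * i.bell := by
  rw [Nat.bell_succ, ← Nat.range_succ_eq_Iic, ← sum_range_reflect]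
  refine sum_congr rfl fun i hi => ?_
  rw [mem_range] at hi
  rw [Nat.add_sub_cancel, Nat.choose_symm (by omega), Nat.sub_sub_self (by omega)]

theorem eq_bell_of_recurrence {B : ℕ → ℕ} (hB0 : B 0 = 1)
    (hBrec : ∀ m, B (m + 1) = ∑ i ∈ range (m + 1), m.choose i * B i) : B = Nat.bell := by
  funext n
  induction n using Nat.strong_induction_on with
  | _ n ih =>
    rcases n with _ | n
    · rw [hB0, Nat.bell_zero]
    · rw [hBrec, Nat.bell_succ_eq_sum_choose_mul_bell]
      exact sum_congr rfl fun i hi => by rw [ih i (by simp at hi; omega)]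

variable {α : Type*}

theorem List.append_cons_eq_append_cons_cons {σ τ u v : List α} {m b c : α}
    (hb : b ≠ m) (hc : c ≠ m) (h : σ ++ m :: τ = u ++ b :: c :: v) :
    (∃ w, σ = u ++ b :: c :: w ∧ v = w ++ m :: τ) ∨
      ∃ w, u = σ ++ m :: w ∧ τ = w ++ b :: c :: v := by
  rcases List.append_eq_append_iff.mp h with ⟨w, rfl, hw⟩ | ⟨w, rfl, hw⟩
  · rcases w with _ | ⟨x, w⟩
    · exact absurd (List.cons.inj hw).1.symm hb
    · obtain ⟨rfl, rfl⟩ := List.cons.inj hw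
      exact Or.inr ⟨w, rfl, rfl⟩
  · rcases w with _ | ⟨x, _ | ⟨y, w⟩⟩
    · exact absurd (List.cons.inj hw).1 hb
    · simp only [List.cons_append, List.nil_append, List.cons.injEq] at hw
      exact absurd hw.2.1 hc
    · simp only [List.cons_append, List.cons.injEq] at hw
      obtain ⟨rfl, rfl, rfl⟩ := hw
      exact Or.inl ⟨w, rfl, rfl⟩

section Patterns

variable [Preorder α]

/- Vincular patterns: the letters `b c` of the pattern `12` are adjacent, which is encoded by the
factorization `π = u ++ b :: c :: v`. -/

def HasAscent (π : List α) : Prop :=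
  ∃ u b c v, π = u ++ b :: c :: v ∧ b < c

def Has312 (π : List α) : Prop :=
  ∃ u b c v, π = u ++ b :: c :: v ∧ b < c ∧ ∃ a ∈ u, c < a

def Has123 (π : List α) : Prop :=
  ∃ u b c v, π = u ++ b :: c :: v ∧ b < c ∧ ∃ d ∈ v, c < d

def Has3123 (π : List α) : Prop :=
  ∃ u b c v, π = u ++ b :: c :: v ∧ b < c ∧ (∃ a ∈ u, c < a) ∧ ∃ d ∈ v, c < d

theorem le_of_mem_append_cons_s10 {σ τ : List α} {m x : α} (hσ : ∀ x ∈ σ, x < m)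
    (hτ : ∀ x ∈ τ, x < m) (hx : x ∈ σ ++ m :: τ) : x ≤ m := by
  simp only [List.mem_append, List.mem_cons] at hx
  rcases hx with hx | rfl | hx
  exacts [(hσ x hx).le, le_rfl, (hτ x hx).le]

variable {σ τ : List α} {m : α}

theorem has3123_append_cons_iff (hσ : ∀ x ∈ σ, x < m) (hτ : ∀ x ∈ τ, x < m) :
    Has3123 (σ ++ m :: τ) ↔ Has312 σ ∨ Has123 τ := by
  constructor
  · rintro ⟨u, b, c, v, h, hbc, ⟨a, ha, hca⟩, ⟨d, hd, hcd⟩⟩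
    have hcm : c < m := hca.trans_le (le_of_mem_append_cons_s10 hσ hτ (h ▸ by simp [ha]))
    rcases List.append_cons_eq_append_cons_cons (hbc.trans hcm).ne hcm.ne h with
      ⟨w, rfl, rfl⟩ | ⟨w, rfl, rfl⟩
    · exact Or.inl ⟨u, b, c, w, rfl, hbc, a, ha, hca⟩
    · exact Or.inr ⟨w, b, c, v, rfl, hbc, d, hd, hcd⟩
  · rintro (⟨u, b, c, w, rfl, hbc, a, ha, hca⟩ | ⟨w, b, c, v, rfl, hbc, d, hd, hcd⟩)
    · exact ⟨u, b, c, w ++ m :: τ, by simp, hbc, ⟨a, ha, hca⟩, m, by simp,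
        hca.trans (hσ a (by simp [ha]))⟩
    · exact ⟨σ ++ m :: w, b, c, v, by simp, hbc, ⟨m, by simp, hτ c (by simp)⟩,
        d, hd, hcd⟩

theorem has312_append_cons_iff (hσ : ∀ x ∈ σ, x < m) (hτ : ∀ x ∈ τ, x < m) :
    Has312 (σ ++ m :: τ) ↔ Has312 σ ∨ HasAscent τ := by
  constructor
  · rintro ⟨u, b, c, v, h, hbc, a, ha, hca⟩
    have hcm : c < m := hca.trans_le (le_of_mem_append_cons_s10 hσ hτ (h ▸ by simp [ha]))
    rcases List.append_cons_eq_append_cons_cons (hbc.trans hcm).ne hcm.ne h with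
      ⟨w, rfl, rfl⟩ | ⟨w, rfl, rfl⟩
    · exact Or.inl ⟨u, b, c, w, rfl, hbc, a, ha, hca⟩
    · exact Or.inr ⟨w, b, c, v, rfl, hbc⟩
  · rintro (⟨u, b, c, w, rfl, hbc, a, ha, hca⟩ | ⟨w, b, c, v, rfl, hbc⟩)
    · exact ⟨u, b, c, w ++ m :: τ, by simp, hbc, a, ha, hca⟩
    · exact ⟨σ ++ m :: w, b, c, v, by simp, hbc, m, by simp, hτ c (by simp)⟩

theorem has123_append_cons_iff (hσ : ∀ x ∈ σ, x < m) (hτ : ∀ x ∈ τ, x < m) :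
    Has123 (σ ++ m :: τ) ↔ HasAscent σ ∨ Has123 τ := by
  constructor
  · rintro ⟨u, b, c, v, h, hbc, d, hd, hcd⟩
    have hcm : c < m := hcd.trans_le (le_of_mem_append_cons_s10 hσ hτ (h ▸ by simp [hd]))
    rcases List.append_cons_eq_append_cons_cons (hbc.trans hcm).ne hcm.ne h with
      ⟨w, rfl, rfl⟩ | ⟨w, rfl, rfl⟩
    · exact Or.inl ⟨u, b, c, w, rfl, hbc⟩
    · exact Or.inr ⟨w, b, c, v, rfl, hbc, d, hd, hcd⟩
  · rintro (⟨u, b, c, w, rfl, hbc⟩ | ⟨w, b, c, v, rfl, hbc, d, hd, hcd⟩)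
    · exact ⟨u, b, c, w ++ m :: τ, by simp, hbc, m, by simp, hσ c (by simp)⟩
    · exact ⟨σ ++ m :: w, b, c, v, by simp, hbc, d, hd, hcd⟩

end Patterns

theorem occ3123_iff_has3123 (π : List ℕ) : Occ3123 π ↔ Has3123 π := by
  constructor
  · rintro ⟨i, j, l, hij, hjl, hl, hbc, hca, hcd⟩
    rw [List.getD_eq_getElem _ _ (by omega), List.getD_eq_getElem _ _ (by omega)] at hbc hca hcd
    refine ⟨π.take j, π[j], π[j + 1], π.drop (j + 2), ?_, hbc, ⟨π[i], ?_, hca⟩,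
      π[l], ?_, hcd⟩
    · rw [← List.drop_eq_getElem_cons, ← List.drop_eq_getElem_cons, List.take_append_drop]
    · exact List.mem_take_iff_getElem.mpr ⟨i, by omega, rfl⟩
    · exact List.mem_drop_iff_getElem.mpr ⟨l - (j + 2), by omega, by congr 1; omega⟩
  · rintro ⟨u, b, c, v, rfl, hbc, ⟨a, ha, hca⟩, d, hd, hcd⟩
    obtain ⟨i, hi, rfl⟩ := List.getElem_of_mem ha
    obtain ⟨k, hk, rfl⟩ := List.getElem_of_mem hd
    refine ⟨i, u.length, u.length + (k + 2), hi, by omega, by simp; omega, ?_, ?_, ?_⟩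
    · simpa [List.getD_append, List.getD_append_right] using hbc
    · simpa [List.getElem?_append_left hi, List.getElem?_eq_getElem hi] using hca
    · simpa [List.getElem?_append_right, hk] using hcd

def arrangements (S : Finset α) : Finset (List α) :=
  ⟨S.val.lists, Multiset.lists_nodup_finset S⟩

theorem mem_arrangements {S : Finset α} {l : List α} :
    l ∈ arrangements S ↔ l.Nodup ∧ ∀ x, x ∈ l ↔ x ∈ S := by
  rw [arrangements, Finset.mem_mk, Multiset.mem_lists_iff, Multiset.quot_mk_to_coe]
  constructor
  · intro h
    have hl : l.Nodup := Multiset.coe_nodup.mp (h ▸ S.nodup)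
    exact ⟨hl, fun x => by rw [← Multiset.mem_coe, ← h, Finset.mem_val]⟩
  · rintro ⟨hl, hmem⟩
    exact (Multiset.Nodup.ext S.nodup (Multiset.coe_nodup.mpr hl)).mpr fun x => (hmem x).symm

open scoped Classical in
noncomputable def numArrangements (P : List α → Prop) (S : Finset α) : ℕ :=
  #{l ∈ arrangements S | P l}

theorem numArrangements_empty {P : List α → Prop} (h : P []) : numArrangements P ∅ = 1 := by
  rw [numArrangements, card_eq_one]
  refine ⟨[], eq_singleton_iff_unique_mem.mpr ⟨?_, fun l hl => ?_⟩⟩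
  · simp [mem_arrangements, h]
  · simp only [mem_filter, mem_arrangements] at hl
    simpa [List.eq_nil_iff_forall_not_mem] using hl.1.2

section LinearOrder

variable [LinearOrder α]

theorem forall_lt_of_mem_arrangements {m : α} {S T : Finset α} {l : List α}
    (hS : ∀ x ∈ S, x < m) (hT : T ⊆ S) (hl : l ∈ arrangements T) : ∀ x ∈ l, x < m :=
  fun x hx => hS x (hT (((mem_arrangements.mp hl).2 x).mp hx))

theorem append_cons_mem_arrangements_insert {m : α} {S T : Finset α} {σ τ : List α}
    (hS : ∀ x ∈ S, x < m) (hT : T ⊆ S) (hσ : σ ∈ arrangements T)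
    (hτ : τ ∈ arrangements (S \ T)) : σ ++ m :: τ ∈ arrangements (insert m S) := by
  have hσm := forall_lt_of_mem_arrangements hS hT hσ
  have hτm := forall_lt_of_mem_arrangements hS sdiff_subset hτ
  rw [mem_arrangements] at hσ hτ ⊢
  refine ⟨?_, fun x => ?_⟩
  · simp only [List.nodup_append, List.nodup_cons]
    grind
  · simp only [List.mem_append, List.mem_cons, mem_insert]
    grind

theorem exists_eq_append_cons_of_mem_arrangements_insert {m : α} {S : Finset α} {π : List α}
    (hS : ∀ x ∈ S, x < m) (hπ : π ∈ arrangements (insert m S)) :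
    ∃ σ τ, π = σ ++ m :: τ ∧ σ.toFinset ⊆ S ∧ σ ∈ arrangements σ.toFinset ∧
      τ ∈ arrangements (S \ σ.toFinset) := by
  rw [mem_arrangements] at hπ
  obtain ⟨hnd, hmem⟩ := hπ
  obtain ⟨σ, τ, rfl⟩ := List.append_of_mem ((hmem m).mpr (mem_insert_self m S))
  simp only [List.nodup_append, List.nodup_cons, List.mem_cons] at hnd
  obtain ⟨hσnd, ⟨hmτ, hτnd⟩, hdisj⟩ := hnd
  have hSστ : ∀ x, x ∈ S ↔ x ∈ σ ∨ x ∈ τ := fun x => by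
    have := hmem x
    simp only [List.mem_append, List.mem_cons, mem_insert] at this
    have := hS x
    grind
  refine ⟨σ, τ, rfl, fun x hx => (hSστ x).mpr (Or.inl (List.mem_toFinset.mp hx)),
    mem_arrangements.mpr ⟨hσnd, fun x => List.mem_toFinset.symm⟩,
    mem_arrangements.mpr ⟨hτnd, fun x => ?_⟩⟩
  rw [mem_sdiff, List.mem_toFinset, hSστ]
  exact ⟨fun hx => ⟨Or.inr hx, fun hσx => hdisj x hσx x (Or.inr hx) rfl⟩,
    fun h => h.1.resolve_left h.2⟩

theorem numArrangements_insert (P Q R : List α → Prop) {m : α} {S : Finset α}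
    (hS : ∀ x ∈ S, x < m)
    (hR : ∀ σ τ : List α, (∀ x ∈ σ, x < m) → (∀ x ∈ τ, x < m) →
      (R (σ ++ m :: τ) ↔ P σ ∧ Q τ)) :
    numArrangements R (insert m S) =
      ∑ T ∈ S.powerset, numArrangements P T * numArrangements Q (S \ T) := by
  simp only [numArrangements, ← card_product, ← card_sigma]
  symm
  refine card_bij (fun x _ => x.2.1 ++ m :: x.2.2) ?_ ?_ ?_
  · rintro ⟨T, σ, τ⟩ h
    simp only [mem_sigma, mem_powerset, mem_product, mem_filter] at h ⊢
    obtain ⟨hT, ⟨hσ, hP⟩, hτ, hQ⟩ := h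
    exact ⟨append_cons_mem_arrangements_insert hS hT hσ hτ,
      (hR σ τ (forall_lt_of_mem_arrangements hS hT hσ)
        (forall_lt_of_mem_arrangements hS sdiff_subset hτ)).mpr ⟨hP, hQ⟩⟩
  · rintro ⟨T, σ, τ⟩ h ⟨T', σ', τ'⟩ h' heq
    simp only [mem_sigma, mem_powerset, mem_product, mem_filter] at h h'
    obtain ⟨hT, ⟨hσ, -⟩, hτ, -⟩ := h
    have hmσ : m ∉ σ := fun hm => (forall_lt_of_mem_arrangements hS hT hσ m hm).false
    have hmτ : m ∉ τ := fun hm => (forall_lt_of_mem_arrangements hS sdiff_subset hτ m hm).false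
    obtain ⟨rfl, -, rfl⟩ := (List.append_cons_inj_of_notMem hmσ hmτ).mp heq
    obtain rfl : T = T' := Finset.ext fun x =>
      ((mem_arrangements.mp hσ).2 x).symm.trans ((mem_arrangements.mp h'.2.1.1).2 x)
    rfl
  · intro π hπ
    simp only [mem_filter] at hπ
    obtain ⟨σ, τ, rfl, hT, hσ, hτ⟩ :=
      exists_eq_append_cons_of_mem_arrangements_insert hS hπ.1
    obtain ⟨hP, hQ⟩ := (hR σ τ (forall_lt_of_mem_arrangements hS hT hσ)
        (forall_lt_of_mem_arrangements hS sdiff_subset hτ)).mp hπ.2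
    refine ⟨⟨σ.toFinset, σ, τ⟩, ?_, rfl⟩
    simp only [mem_sigma, mem_powerset, mem_product, mem_filter]
    exact ⟨hT, ⟨hσ, hP⟩, hτ, hQ⟩

theorem not_hasAscent_iff_isChain_ge {l : List α} : ¬ HasAscent l ↔ l.IsChain (· ≥ ·) := by
  simp only [HasAscent, List.isChain_iff_forall_rel_of_append_cons_cons, not_exists, not_and,
    not_lt]
  exact ⟨fun h a b l₁ l₂ => h l₁ a b l₂, fun h l₁ a b l₂ => @h a b l₁ l₂⟩

theorem numArrangements_not_hasAscent (S : Finset α) :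
    numArrangements (¬ HasAscent ·) S = 1 := by
  rw [numArrangements, card_eq_one]
  refine ⟨S.sort (· ≥ ·), eq_singleton_iff_unique_mem.mpr ⟨?_, fun l hl => ?_⟩⟩
  · simp only [mem_filter, mem_arrangements, not_hasAscent_iff_isChain_ge]
    exact ⟨⟨sort_nodup S _, fun x => mem_sort _⟩, (pairwise_sort S _).isChain⟩
  · simp only [mem_filter, mem_arrangements, not_hasAscent_iff_isChain_ge] at hl
    obtain ⟨⟨hnd, hmem⟩, hchain⟩ := hl
    refine List.Perm.eq_of_pairwise' hchain.pairwise (pairwise_sort S _) ?_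
    exact (List.perm_ext_iff_of_nodup hnd (sort_nodup S _)).mpr fun x => by rw [hmem, mem_sort]

theorem Finset.Nonempty.exists_eq_insert_of_forall_lt {S : Finset α} (hS : S.Nonempty) :
    ∃ m T, (∀ x ∈ T, x < m) ∧ S = insert m T :=
  ⟨S.max' hS, S.erase (S.max' hS), fun _ => lt_max'_of_mem_erase_max' S hS,
    (insert_erase (max'_mem S hS)).symm⟩

theorem numArrangements_not_has312 (S : Finset α) :
    numArrangements (¬ Has312 ·) S = (#S).bell := by
  induction S using Finset.strongInduction with
  | H S ih =>
    rcases S.eq_empty_or_nonempty with rfl | hne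
    · rw [card_empty, Nat.bell_zero]
      exact numArrangements_empty (by rintro ⟨u, b, c, v, h, -⟩; simp at h)
    obtain ⟨m, S, hS, rfl⟩ := hne.exists_eq_insert_of_forall_lt
    have hmS : m ∉ S := fun h => (hS m h).false
    rw [numArrangements_insert _ (¬ HasAscent ·) _ hS fun σ τ hσ hτ => by
      rw [has312_append_cons_iff hσ hτ, not_or]]
    calc ∑ T ∈ S.powerset,
          numArrangements (¬ Has312 ·) T * numArrangements (¬ HasAscent ·) (S \ T)
        = ∑ T ∈ S.powerset, (#T).bell := sum_congr rfl fun T hT => by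
          rw [numArrangements_not_hasAscent, mul_one,
            ih T ((mem_powerset.mp hT).trans_ssubset (ssubset_insert hmS))]
      _ = (#(insert m S)).bell := by
          simp only [sum_powerset_apply_card, smul_eq_mul, card_insert_of_notMem hmS,
            Nat.bell_succ_eq_sum_choose_mul_bell]

theorem numArrangements_not_has123 (S : Finset α) :
    numArrangements (¬ Has123 ·) S = (#S).bell := by
  induction S using Finset.strongInduction with
  | H S ih =>
    rcases S.eq_empty_or_nonempty with rfl | hne
    · rw [card_empty, Nat.bell_zero]
      exact numArrangements_empty (by rintro ⟨u, b, c, v, h, -⟩; simp at h)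
    obtain ⟨m, S, hS, rfl⟩ := hne.exists_eq_insert_of_forall_lt
    have hmS : m ∉ S := fun h => (hS m h).false
    rw [numArrangements_insert (¬ HasAscent ·) _ _ hS fun σ τ hσ hτ => by
      rw [has123_append_cons_iff hσ hτ, not_or]]
    calc ∑ T ∈ S.powerset,
          numArrangements (¬ HasAscent ·) T * numArrangements (¬ Has123 ·) (S \ T)
        = ∑ T ∈ S.powerset, (#S - #T).bell := sum_congr rfl fun T hT => by
          rw [numArrangements_not_hasAscent, one_mul,
            ih _ (sdiff_subset.trans_ssubset (ssubset_insert hmS)),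
            card_sdiff_of_subset (mem_powerset.mp hT)]
      _ = (#(insert m S)).bell := by
          simp only [sum_powerset_apply_card (fun j => (#S - j).bell), smul_eq_mul,
            card_insert_of_notMem hmS, Nat.bell_succ, Nat.range_succ_eq_Iic]

theorem numArrangements_not_has3123_insert {m : α} {S : Finset α} (hS : ∀ x ∈ S, x < m) :
    numArrangements (¬ Has3123 ·) (insert m S) =
      ∑ i ∈ range (#S + 1), (#S).choose i * (i.bell * (#S - i).bell) := by
  rw [numArrangements_insert _ _ _ hS fun σ τ hσ hτ => by
    rw [has3123_append_cons_iff hσ hτ, not_or]]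
  calc ∑ T ∈ S.powerset,
        numArrangements (¬ Has312 ·) T * numArrangements (¬ Has123 ·) (S \ T)
      = ∑ T ∈ S.powerset, (#T).bell * (#S - #T).bell := sum_congr rfl fun T hT => by
        rw [numArrangements_not_has312, numArrangements_not_has123,
          card_sdiff_of_subset (mem_powerset.mp hT)]
    _ = _ := by simp only [sum_powerset_apply_card (fun j => j.bell * (#S - j).bell), smul_eq_mul]

end LinearOrder

theorem isPermOf_iff_mem_arrangements {n : ℕ} {l : List ℕ} :
    IsPermOf n l ↔ l ∈ arrangements (Icc 1 n) := by
  have hnd : ((List.range n).map (· + 1)).Nodup :=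
    List.nodup_range.map fun _ _ h => Nat.add_right_cancel h
  have hmem : ∀ x, x ∈ (List.range n).map (· + 1) ↔ x ∈ Icc 1 n := fun x => by
    simp only [List.mem_map, List.mem_range, mem_Icc]
    constructor
    · rintro ⟨y, hy, rfl⟩
      omega
    · exact fun hx => ⟨x - 1, by omega, by omega⟩
  rw [IsPermOf, mem_arrangements]
  exact ⟨fun h => ⟨h.nodup_iff.mpr hnd, fun x => h.mem_iff.trans (hmem x)⟩,
    fun ⟨hl, h⟩ => (List.perm_ext_iff_of_nodup hl hnd).mpr fun x => (h x).trans (hmem x).symm⟩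

theorem natCard_isPermOf_eq_numArrangements (P : List ℕ → Prop) (n : ℕ) :
    Nat.card {l : List ℕ // IsPermOf n l ∧ P l} = numArrangements P (Icc 1 n) := by
  rw [numArrangements, ← Nat.card_eq_finsetCard]
  exact Nat.card_congr (Equiv.subtypeEquivRight fun l => by
    simp only [mem_filter, isPermOf_iff_mem_arrangements])

/-- If `B` is the sequence of Bell numbers and `a n` the number of
`(3-12-3)`-avoiding permutations of length `n`, then
`a (n+1) = ∑ C(n,i) Bᵢ B_{n-i}`. -/
theorem count_avoid_3123 (B : ℕ → ℕ) (hB0 : B 0 = 1)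
    (hBrec : ∀ m, B (m + 1) = ∑ i ∈ Finset.range (m + 1), Nat.choose m i * B i)
    (n : ℕ) :
    Nat.card {l : List ℕ // IsPermOf (n + 1) l ∧ ¬ Occ3123 l} =
      ∑ i ∈ Finset.range (n + 1), Nat.choose n i * (B i * B (n - i)) := by
  obtain rfl := eq_bell_of_recurrence hB0 hBrec
  simp only [occ3123_iff_has3123, natCard_isPermOf_eq_numArrangements]
  rw [← insert_Icc_right_eq_Icc_add_one (by omega),
    numArrangements_not_has3123_insert fun x hx => Nat.lt_add_one_of_le (mem_Icc.mp hx).2,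
    Nat.card_Icc, Nat.add_sub_cancel]
end
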